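/- arXiv:1401.7209 — 8 statements merged into one kernel-verified Lean document; each statement's English description precedes it below -/
import Mathlib

section
/- Let α, β, γ, δ be real constants with α > 0 and δ > 0. Then hypothesis (H) — max(β, γ) ≥ 0 or βγ < αδ — holds if and only if there exist λ ≥ 0 and μ ≥ 0 such that λα + μγ > 0 and λβ + μδ > 0. -/
/-!
The pair `(λ, μ)` asks for a nonnegative vector mapped to a positive one by `A = !![α, γ; β, δ]`.
If an off-diagonal entry is nonnegative, its column is nonnegative with a positive diagonal entry,
so weighting that column heavily enough works.
If both are negative, the adjugate of `A` applied to `(1, 1)`, namely `(δ - γ, α - β)`, is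
nonnegative and maps to `(det A, det A)`, so `det A > 0` suffices; conversely, with `β, γ < 0`
both weights must be positive, and multiplying `λα > μ(-γ)` by `μδ > λ(-β)` gives `αδ > βγ`.
-/

def HasPosCombination (α β γ δ : ℝ) : Prop :=
  ∃ lam mu : ℝ, 0 ≤ lam ∧ 0 ≤ mu ∧ 0 < lam * α + mu * γ ∧ 0 < lam * β + mu * δ

namespace HasPosCombination

variable {α β γ δ : ℝ}

theorem symm (h : HasPosCombination α β γ δ) : HasPosCombination δ γ β α := by
  obtain ⟨lam, mu, hlam, hmu, h₁, h₂⟩ := h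
  exact ⟨mu, lam, hmu, hlam, by linarith, by linarith⟩

theorem of_lower_nonneg (hα : 0 < α) (hδ : 0 < δ) (hβ : 0 ≤ β) : HasPosCombination α β γ δ :=
  ⟨|γ| + 1, α, by positivity, hα.le, by nlinarith [neg_abs_le γ], by nlinarith [abs_nonneg γ]⟩

theorem of_mul_lt_mul (hβα : β ≤ α) (hγδ : γ ≤ δ) (h : β * γ < α * δ) :
    HasPosCombination α β γ δ :=
  ⟨δ - γ, α - β, sub_nonneg.mpr hγδ, sub_nonneg.mpr hβα, by nlinarith, by nlinarith⟩

theorem mul_lt_mul (h : HasPosCombination α β γ δ) (hβ : β < 0) (hγ : γ < 0) :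
    β * γ < α * δ := by
  obtain ⟨lam, mu, hlam, hmu, h₁, h₂⟩ := h
  have hlamβ : 0 ≤ lam * -β := mul_nonneg hlam (by linarith)
  have hmuγ : 0 ≤ mu * -γ := mul_nonneg hmu (by linarith)
  have hlamα : 0 < lam * α := by linarith
  have hmuδ : 0 < mu * δ := by linarith
  have hlam' : 0 < lam := hlam.lt_of_ne' (left_ne_zero_of_mul hlamα.ne')
  have hmu' : 0 < mu := hmu.lt_of_ne' (left_ne_zero_of_mul hmuδ.ne')
  have key : (lam * mu) * (β * γ) < (lam * mu) * (α * δ) :=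
    calc (lam * mu) * (β * γ) = (lam * -β) * (mu * -γ) := by ring
      _ < (mu * δ) * (lam * α) :=
        mul_lt_mul'' (by linarith) (by linarith) hlamβ hmuγ
      _ = (lam * mu) * (α * δ) := by ring
  exact lt_of_mul_lt_mul_left key (by positivity)

end HasPosCombination

/-- For real constants `α, β, γ, δ` with `α > 0` and `δ > 0`, hypothesis (H)
(`max β γ ≥ 0` or `βγ < αδ`) holds iff there exist `λ ≥ 0`, `μ ≥ 0` with
`λα + μγ > 0` and `λβ + μδ > 0`. -/
theorem hypothesis_H_iff_S_matrix (α β γ δ : ℝ) (hα : 0 < α) (hδ : 0 < δ) :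
    (max β γ ≥ 0 ∨ β * γ < α * δ) ↔
      ∃ lam mu : ℝ, 0 ≤ lam ∧ 0 ≤ mu ∧ 0 < lam * α + mu * γ ∧ 0 < lam * β + mu * δ := by
  change _ ↔ HasPosCombination α β γ δ
  rcases le_or_gt 0 (max β γ) with hmax | hmax
  · refine iff_of_true (Or.inl hmax) ?_
    rcases le_max_iff.mp hmax with hβ | hγ
    · exact .of_lower_nonneg hα hδ hβ
    · exact (HasPosCombination.of_lower_nonneg hδ hα hγ).symm
  · obtain ⟨hβ, hγ⟩ := max_lt_iff.mp hmax
    rw [or_iff_right hmax.not_ge]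
    exact ⟨.of_mul_lt_mul (by linarith) (by linarith), fun h ↦ h.mul_lt_mul hβ hγ⟩
end

section
/- Let α, β, γ, δ be real constants with α > 0, δ > 0, β < 0, γ < 0 and αδ < βγ. Then for every (x₀, y₀) ∈ S there exists no solution to the system starting at (x₀, y₀). -/
open MeasureTheory

/-- A solution to the system starting at `(x₀, y₀)`: a pair of continuous functions
`x, y : [0,∞) → [0,∞)` (modelled as functions `ℝ → ℝ` that are continuous and
nonnegative on `[0,∞)`) with `x 0 = x₀`, `y 0 = y₀`, such that for all `t ≥ 0`
the sets `{s ∈ [0,t] | x s = 0}` and `{s ∈ [0,t] | y s = 0}` are Lebesgue-null, the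
integrals `∫₀ᵗ ds / x s` and `∫₀ᵗ ds / y s` are finite (note `1 / 0 = 0` in Lean, so
`1 / x s` is the same as `1_{x(s) > 0} / x s`), and the two integral equations hold. -/
def IsSolution (α β γ δ x₀ y₀ : ℝ) (x y : ℝ → ℝ) : Prop :=
  ContinuousOn x (Set.Ici 0) ∧ ContinuousOn y (Set.Ici 0) ∧
  (∀ t ≥ (0:ℝ), 0 ≤ x t ∧ 0 ≤ y t) ∧
  x 0 = x₀ ∧ y 0 = y₀ ∧
  ∀ t ≥ (0:ℝ),
    volume {s ∈ Set.Icc (0:ℝ) t | x s = 0} = 0 ∧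
    volume {s ∈ Set.Icc (0:ℝ) t | y s = 0} = 0 ∧
    IntervalIntegrable (fun s => 1 / x s) volume 0 t ∧
    IntervalIntegrable (fun s => 1 / y s) volume 0 t ∧
    x t = x₀ + α * (∫ s in (0:ℝ)..t, 1 / x s) + β * (∫ s in (0:ℝ)..t, 1 / y s) ∧
    y t = y₀ + γ * (∫ s in (0:ℝ)..t, 1 / x s) + δ * (∫ s in (0:ℝ)..t, 1 / y s)

open Set

/-!
Let `e = βγ - αδ > 0`. The weights `(δ, -β)` kill the `∫ 1/y` term, so along a solution
`δ x - β y = C - e ∫₀ᵗ 1/x` with `C = δ x₀ - β y₀`. Both terms on the left are nonnegative,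
hence `x ≤ C/δ` and `∫₀ᵗ 1/x ≤ C/e` for all `t`. But `x ≤ C/δ` forces `1/x ≥ δ/C` almost
everywhere, so `∫₀ᵗ 1/x` grows at least linearly in `t`: a contradiction for large `t`.
-/

-- Stated as `T ≤ K * ∫ 1/f` rather than `T / K ≤ ∫ 1/f` so that it also covers `K = 0`.
theorem le_mul_integral_one_div {f : ℝ → ℝ} {K T : ℝ} (hT : 0 ≤ T)
    (hf : ∀ s ∈ Icc 0 T, 0 ≤ f s ∧ f s ≤ K)
    (hnull : volume {s ∈ Icc 0 T | f s = 0} = 0)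
    (hint : IntervalIntegrable (fun s => 1 / f s) volume 0 T) :
    T ≤ K * ∫ s in (0:ℝ)..T, 1 / f s := by
  have hae : ∀ᵐ s ∂volume.restrict (Icc 0 T), (1 : ℝ) ≤ K * (1 / f s) := by
    rw [ae_restrict_iff' measurableSet_Icc, ae_iff]
    refine measure_mono_null (fun s hs => ?_) hnull
    rw [mem_ofPred_eq, Classical.not_imp] at hs
    refine ⟨hs.1, by_contra fun hne => hs.2 ?_⟩
    have hpos : 0 < f s := lt_of_le_of_ne (hf s hs.1).1 (Ne.symm hne)
    rw [mul_one_div, one_le_div hpos]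
    exact (hf s hs.1).2
  calc T = ∫ _ in (0:ℝ)..T, (1 : ℝ) := by simp
    _ ≤ ∫ s in (0:ℝ)..T, K * (1 / f s) :=
      intervalIntegral.integral_mono_ae_restrict hT intervalIntegrable_const
        (hint.const_mul K) hae
    _ = K * ∫ s in (0:ℝ)..T, 1 / f s := intervalIntegral.integral_const_mul K _

theorem integral_one_div_nonneg {f : ℝ → ℝ} {T : ℝ} (hT : 0 ≤ T)
    (hf : ∀ s ∈ Icc 0 T, 0 ≤ f s) : 0 ≤ ∫ s in (0:ℝ)..T, 1 / f s :=
  intervalIntegral.integral_nonneg hT fun s hs => one_div_nonneg.mpr (hf s hs)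

namespace IsSolution

variable {α β γ δ x₀ y₀ : ℝ} {x y : ℝ → ℝ}

theorem nonneg (hs : IsSolution α β γ δ x₀ y₀ x y) {t : ℝ} (ht : 0 ≤ t) : 0 ≤ x t ∧ 0 ≤ y t :=
  hs.2.2.1 t ht

theorem lyapunov_eq (hs : IsSolution α β γ δ x₀ y₀ x y) {t : ℝ} (ht : 0 ≤ t) :
    δ * x t - β * y t
      = δ * x₀ - β * y₀ - (β * γ - α * δ) * ∫ s in (0:ℝ)..t, 1 / x s := by
  obtain ⟨-, -, -, -, hx, hy⟩ := hs.2.2.2.2.2 t ht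
  rw [hx, hy]
  ring

theorem lyapunov_bounds (hs : IsSolution α β γ δ x₀ y₀ x y) (hδ : 0 < δ) (hβ : β < 0)
    (h : α * δ < β * γ) {t : ℝ} (ht : 0 ≤ t) :
    δ * x t ≤ δ * x₀ - β * y₀ ∧
      (β * γ - α * δ) * (∫ s in (0:ℝ)..t, 1 / x s) ≤ δ * x₀ - β * y₀ := by
  have hA := integral_one_div_nonneg ht fun s hs' => (hs.nonneg hs'.1).1
  have hxt := mul_nonneg hδ.le (hs.nonneg ht).1
  have hyt := mul_nonpos_of_nonpos_of_nonneg hβ.le (hs.nonneg ht).2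
  have heA := mul_nonneg (sub_nonneg.mpr h.le) hA
  have := hs.lyapunov_eq ht
  constructor <;> linarith

end IsSolution

theorem no_solution_general (α β γ δ : ℝ) (hδ : 0 < δ) (hβ : β < 0)
    (h : α * δ < β * γ) (x₀ y₀ : ℝ) :
    ¬ ∃ x y : ℝ → ℝ, IsSolution α β γ δ x₀ y₀ x y := by
  rintro ⟨x, y, hs⟩
  set C := δ * x₀ - β * y₀
  set e := β * γ - α * δ
  have he : 0 < e := sub_pos.mpr h
  set T := C ^ 2 / (δ * e) + 1
  have hT : 0 ≤ T := by positivity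
  have hbound : ∀ s ∈ Icc 0 T, 0 ≤ x s ∧ x s ≤ C / δ := fun s hs' =>
    ⟨(hs.nonneg hs'.1).1,
      (le_div_iff₀ hδ).mpr (by linarith [(hs.lyapunov_bounds hδ hβ h hs'.1).1])⟩
  obtain ⟨hnull, -, hint, -⟩ := hs.2.2.2.2.2 T hT
  have hlow := le_mul_integral_one_div hT hbound hnull hint
  have hup := (hs.lyapunov_bounds hδ hβ h hT).2
  have hC : 0 ≤ C :=
    (mul_nonneg hδ.le (hs.nonneg le_rfl).1).trans (hs.lyapunov_bounds hδ hβ h le_rfl).1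
  have hcap : C / δ * ∫ s in (0:ℝ)..T, 1 / x s ≤ C / δ * (C / e) :=
    mul_le_mul_of_nonneg_left ((le_div_iff₀ he).mpr (by linarith)) (div_nonneg hC hδ.le)
  have hT' : C / δ * (C / e) = T - 1 := by
    simp only [T]; field_simp; ring
  linarith

/-- If `α > 0`, `δ > 0`, `β < 0`, `γ < 0` and `αδ < βγ`, then for every
`(x₀, y₀) ∈ S` there is no solution to the system starting at `(x₀, y₀)`. -/
theorem no_solution (α β γ δ : ℝ) (hα : 0 < α) (hδ : 0 < δ) (hβ : β < 0) (hγ : γ < 0)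
    (h : α * δ < β * γ) (x₀ y₀ : ℝ) (hx₀ : 0 ≤ x₀) (hy₀ : 0 ≤ y₀) :
    ¬ ∃ x y : ℝ → ℝ, IsSolution α β γ δ x₀ y₀ x y :=
  no_solution_general α β γ δ hδ hβ h x₀ y₀
end

section
/- Assume hypothesis (H) and fix λ > 0, μ > 0 with λα + μγ > 0 and λβ + μδ > 0. Let (x(·), y(·)) be a solution to the system starting at some point of S. Then the function z(t) := λ x(t) + μ y(t) is (strictly) increasing on [0,∞), and (x(t), y(t)) ∈ S° = S \ {(0,0)} for every t > 0. -/
/-!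
With `z = λx + μy`, the integral equations give
`z t - z s = (λα + μγ) ∫ₛᵗ 1/x + (λβ + μδ) ∫ₛᵗ 1/y`, and for `s < t` both integrals are positive
because `x, y ≥ 0` vanish only on null sets. As `z 0 ≥ 0`, strict monotonicity forces `z t > 0`
for `t > 0`, so `(x t, y t) ≠ (0, 0)`.
-/

open MeasureTheory

open Set

theorem intervalIntegral_pos_of_ae_pos {f : ℝ → ℝ} {a b : ℝ} (hab : a < b)
    (hfi : IntervalIntegrable f volume a b) (hpos : ∀ᵐ u ∂volume.restrict (Ioc a b), 0 < f u) :
    0 < ∫ u in a..b, f u := by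
  rw [intervalIntegral.integral_of_le hab.le,
    integral_pos_iff_support_of_nonneg_ae (hpos.mono fun _ hu => hu.le) hfi.1]
  have hsupp : (univ : Set ℝ) ≤ᵐ[volume.restrict (Ioc a b)] Function.support f :=
    hpos.mono fun u hu _ => hu.ne'
  calc (0 : ENNReal) < volume (Ioc a b) := by simp [hab]
    _ = volume.restrict (Ioc a b) univ := by simp
    _ ≤ volume.restrict (Ioc a b) (Function.support f) := measure_mono_ae hsupp

theorem integral_one_div_pos_of_null_zeros {g : ℝ → ℝ} {s t : ℝ} (hs : 0 ≤ s) (hst : s < t)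
    (hnn : ∀ u ≥ 0, 0 ≤ g u) (hnull : volume {u ∈ Icc 0 t | g u = 0} = 0)
    (hint : IntervalIntegrable (fun u => 1 / g u) volume s t) :
    0 < ∫ u in s..t, 1 / g u := by
  refine intervalIntegral_pos_of_ae_pos hst hint ((ae_restrict_iff' measurableSet_Ioc).2 ?_)
  refine ae_iff.2 (measure_mono_null (fun u hu => ?_) hnull)
  simp only [not_forall, one_div, inv_pos, mem_ofPred_eq] at hu
  obtain ⟨⟨hsu, hut⟩, hgu⟩ := hu
  have hu0 : 0 ≤ u := hs.trans hsu.le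
  exact ⟨⟨hu0, hut⟩, le_antisymm (not_lt.1 hgu) (hnn u hu0)⟩

theorem IsSolution.strictMonoOn_linear_comb {α β γ δ x₀ y₀ : ℝ} {x y : ℝ → ℝ}
    (h : IsSolution α β γ δ x₀ y₀ x y) {lam mu : ℝ}
    (h1 : 0 < lam * α + mu * γ) (h2 : 0 < lam * β + mu * δ) :
    StrictMonoOn (fun t => lam * x t + mu * y t) (Ici 0) := by
  intro s hs t ht hst
  obtain ⟨-, -, hnn, -, -, heq⟩ := h
  obtain ⟨-, -, ixs, iys, exs, eys⟩ := heq s hs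
  obtain ⟨nxt, nyt, ixt, iyt, ext, eyt⟩ := heq t ht
  have hX : 0 < ∫ u in s..t, 1 / x u :=
    integral_one_div_pos_of_null_zeros hs hst (fun u hu => (hnn u hu).1) nxt (ixs.symm.trans ixt)
  have hY : 0 < ∫ u in s..t, 1 / y u :=
    integral_one_div_pos_of_null_zeros hs hst (fun u hu => (hnn u hu).2) nyt (iys.symm.trans iyt)
  have hz : lam * x t + mu * y t = lam * x s + mu * y s
      + (lam * α + mu * γ) * (∫ u in s..t, 1 / x u) + (lam * β + mu * δ) * ∫ u in s..t, 1 / y u := by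
    rw [← intervalIntegral.integral_interval_sub_left ixt ixs,
      ← intervalIntegral.integral_interval_sub_left iyt iys, ext, eyt, exs, eys]
    ring
  show lam * x s + mu * y s < lam * x t + mu * y t
  linarith [mul_pos h1 hX, mul_pos h2 hY]

theorem increasing_and_punctured_general (α β γ δ : ℝ)
    (lam mu : ℝ) (hlam : 0 < lam) (hmu : 0 < mu)
    (h1 : 0 < lam * α + mu * γ) (h2 : 0 < lam * β + mu * δ)
    (x₀ y₀ : ℝ)
    (x y : ℝ → ℝ) (hsol : IsSolution α β γ δ x₀ y₀ x y) :
    StrictMonoOn (fun t => lam * x t + mu * y t) (Set.Ici 0) ∧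
      ∀ t > (0:ℝ), ¬(x t = 0 ∧ y t = 0) := by
  have hmono := hsol.strictMonoOn_linear_comb h1 h2
  refine ⟨hmono, fun t ht ⟨hxt, hyt⟩ => ?_⟩
  obtain ⟨hx0, hy0⟩ := hsol.2.2.1 0 le_rfl
  have hz : lam * x 0 + mu * y 0 < lam * x t + mu * y t := hmono self_mem_Ici ht.le ht
  rw [hxt, hyt] at hz
  linarith [mul_nonneg hlam.le hx0, mul_nonneg hmu.le hy0]

/-- Under (H), with `λ, μ > 0` such that `λα + μγ > 0` and `λβ + μδ > 0`,
along any solution the function `z(t) = λ x(t) + μ y(t)` is strictly increasing on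
`[0,∞)`, and `(x(t), y(t)) ∈ S° = S \ {(0,0)}` for every `t > 0`. -/
theorem increasing_and_punctured (α β γ δ : ℝ) (hα : 0 < α) (hδ : 0 < δ)
    (hH : max β γ ≥ 0 ∨ β * γ < α * δ)
    (lam mu : ℝ) (hlam : 0 < lam) (hmu : 0 < mu)
    (h1 : 0 < lam * α + mu * γ) (h2 : 0 < lam * β + mu * δ)
    (x₀ y₀ : ℝ) (hx₀ : 0 ≤ x₀) (hy₀ : 0 ≤ y₀)
    (x y : ℝ → ℝ) (hsol : IsSolution α β γ δ x₀ y₀ x y) :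
    StrictMonoOn (fun t => lam * x t + mu * y t) (Set.Ici 0) ∧
      ∀ t > (0:ℝ), ¬(x t = 0 ∧ y t = 0) :=
  increasing_and_punctured_general α β γ δ lam mu hlam hmu h1 h2 x₀ y₀ x y hsol
end

section
/- Assume hypothesis (H). Then the pair x(t) = c√t, y(t) = d√t is a solution to the system starting at (0,0), where c = (2α + (β/δ)(β − γ + √((β−γ)² + 4αδ)))^{1/2} and d = (2δ + (γ/α)(γ − β + √((β−γ)² + 4αδ)))^{1/2}; in particular the quantities 2α + (β/δ)(β − γ + √((β−γ)² + 4αδ)) and 2δ + (γ/α)(γ − β + √((β−γ)² + 4αδ)) are positive. -/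
/-!
The ansatz `x = c√t`, `y = d√t` turns the system into algebra, since `∫₀ᵗ ds / (c√s) = 2√t / c`:
it is a solution iff `c² = 2α + 2βk` and `d² = 2δ + 2γ/k`, where `k = c/d`. Consistency
`c² = k²d²` is the quadratic `δk² = (β - γ)k + α`, whose positive root is
`k = (β - γ + √((β-γ)² + 4αδ)) / (2δ)`. For this root `c² = 2k(δk + γ)` and `d² = 2(δk + γ)/k`,
and `2(δk + γ) = β + γ + √((β-γ)² + 4αδ)` is positive under (H).
-/

open MeasureTheory Set

lemma one_div_mul_sqrt_eq (c : ℝ) :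
    (fun s : ℝ => 1 / (c * √s)) = fun s => c⁻¹ * s ^ (-(1 / 2) : ℝ) := by
  funext s
  rcases lt_trichotomy s 0 with hs | rfl | hs
  · -- for `s < 0` the real power is `exp (log s · r) · cos (r π)`, and `cos (π/2) = 0`
    have hcos : Real.cos (2⁻¹ * Real.pi) = 0 := by
      rw [inv_mul_eq_div, Real.cos_pi_div_two]
    simp [Real.sqrt_eq_zero'.2 hs.le, Real.rpow_def_of_neg hs, hcos]
  · simp
  · rw [Real.sqrt_eq_rpow, Real.rpow_neg hs.le, one_div, mul_inv]

lemma intervalIntegrable_one_div_mul_sqrt (c t : ℝ) :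
    IntervalIntegrable (fun s => 1 / (c * √s)) volume 0 t := by
  rw [one_div_mul_sqrt_eq]
  exact (intervalIntegral.intervalIntegrable_rpow' (by norm_num)).const_mul _

lemma integral_one_div_mul_sqrt (c t : ℝ) :
    ∫ s in (0 : ℝ)..t, 1 / (c * √s) = 2 * √t / c := by
  rw [one_div_mul_sqrt_eq, intervalIntegral.integral_const_mul,
    integral_rpow (Or.inl (by norm_num)), Real.zero_rpow (by norm_num), Real.sqrt_eq_rpow]
  norm_num
  ring

lemma volume_setOf_mul_sqrt_eq_zero {c : ℝ} (hc : c ≠ 0) (t : ℝ) :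
    volume {s ∈ Icc (0 : ℝ) t | c * √s = 0} = 0 := by
  refine measure_mono_null (fun s ⟨hs, hzero⟩ => ?_) (measure_singleton (0 : ℝ))
  have : √s = 0 := (mul_eq_zero.1 hzero).resolve_left hc
  exact le_antisymm (Real.sqrt_eq_zero'.1 this) hs.1

theorem isSolution_mul_sqrt {α β γ δ c d : ℝ} (hc : 0 < c) (hd : 0 < d)
    (hx : c ^ 2 = 2 * α + 2 * β * (c / d)) (hy : d ^ 2 = 2 * γ * (d / c) + 2 * δ) :
    IsSolution α β γ δ 0 0 (fun t => c * √t) (fun t => d * √t) := by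
  refine ⟨(continuous_const.mul Real.continuous_sqrt).continuousOn,
    (continuous_const.mul Real.continuous_sqrt).continuousOn,
    fun t _ => ⟨by positivity, by positivity⟩, by simp, by simp, fun t ht => ?_⟩
  refine ⟨volume_setOf_mul_sqrt_eq_zero hc.ne' t, volume_setOf_mul_sqrt_eq_zero hd.ne' t,
    intervalIntegrable_one_div_mul_sqrt c t, intervalIntegrable_one_div_mul_sqrt d t, ?_, ?_⟩
  all_goals
    simp only [integral_one_div_mul_sqrt]
    field_simp at hx hy ⊢
  · linear_combination √t * hx
  · linear_combination √t * hy

theorem pos_and_isSolution_of_quadratic {α β γ δ k : ℝ} (hk : 0 < k)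
    (hquad : δ * k ^ 2 = (β - γ) * k + α) (hpos : 0 < δ * k + γ) :
    0 < 2 * α + 2 * β * k ∧ 0 < 2 * δ + 2 * γ / k ∧
    IsSolution α β γ δ 0 0 (fun t => √(2 * α + 2 * β * k) * √t)
      (fun t => √(2 * δ + 2 * γ / k) * √t) := by
  have hA : 2 * α + 2 * β * k = 2 * k * (δ * k + γ) := by linear_combination -2 * hquad
  have hB : 2 * δ + 2 * γ / k = 2 * (δ * k + γ) / k := by field_simp
  have hApos : 0 < 2 * α + 2 * β * k := by rw [hA]; positivity
  have hBpos : 0 < 2 * δ + 2 * γ / k := by rw [hB]; positivity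
  have hratio : √(2 * α + 2 * β * k) = k * √(2 * δ + 2 * γ / k) := by
    calc √(2 * α + 2 * β * k) = √(k ^ 2 * (2 * δ + 2 * γ / k)) := by
          rw [hA, hB]; field_simp
      _ = k * √(2 * δ + 2 * γ / k) := by rw [Real.sqrt_mul (sq_nonneg k), Real.sqrt_sq hk.le]
  have hc := Real.sqrt_pos.2 hApos
  have hd := Real.sqrt_pos.2 hBpos
  refine ⟨hApos, hBpos, isSolution_mul_sqrt hc hd ?_ ?_⟩
  · rw [Real.sq_sqrt hApos.le, hratio, mul_div_cancel_right₀ _ hd.ne']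
  · rw [Real.sq_sqrt hBpos.le, hratio]
    field_simp
    ring

lemma add_sqrt_sq_add_pos (a : ℝ) {p : ℝ} (hp : 0 < p) : 0 < a + √(a ^ 2 + p) := by
  have : |a| < √(a ^ 2 + p) := by
    rw [← Real.sqrt_sq_eq_abs]
    exact Real.sqrt_lt_sqrt (sq_nonneg a) (by linarith)
  linarith [neg_abs_le a]

lemma add_add_sqrt_discr_pos {α β γ δ : ℝ} (hα : 0 < α) (hδ : 0 < δ)
    (hH : max β γ ≥ 0 ∨ β * γ < α * δ) :
    0 < β + γ + √((β - γ) ^ 2 + 4 * α * δ) := by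
  rcases lt_or_ge (β * γ) (α * δ) with hlt | hge
  · have hdiscr : (β - γ) ^ 2 + 4 * α * δ = (β + γ) ^ 2 + 4 * (α * δ - β * γ) := by ring
    rw [hdiscr]
    exact add_sqrt_sq_add_pos _ (by linarith)
  · have hβγ : 0 < β * γ := (mul_pos hα hδ).trans_le hge
    have hmax : 0 ≤ max β γ := hH.resolve_right hge.not_gt
    obtain ⟨hβ, hγ⟩ : 0 < β ∧ 0 < γ := by
      rcases le_max_iff.1 hmax with h | h
      · have hβ := h.lt_of_ne (by rintro rfl; simp at hβγ)
        exact ⟨hβ, pos_of_mul_pos_right hβγ hβ.le⟩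
      · have hγ := h.lt_of_ne (by rintro rfl; simp at hβγ)
        exact ⟨pos_of_mul_pos_left hβγ hγ.le, hγ⟩
    positivity

/-- Under (H), the pair `x(t) = c√t`, `y(t) = d√t` is a solution starting
at `(0,0)`, where `c = √(2α + (β/δ)(β − γ + √((β−γ)² + 4αδ)))` and
`d = √(2δ + (γ/α)(γ − β + √((β−γ)² + 4αδ)))`; in particular the two quantities under
the outer square roots are positive. -/
theorem corner_solution (α β γ δ : ℝ) (hα : 0 < α) (hδ : 0 < δ)
    (hH : max β γ ≥ 0 ∨ β * γ < α * δ) :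
    0 < 2 * α + β / δ * (β - γ + Real.sqrt ((β - γ) ^ 2 + 4 * α * δ)) ∧
    0 < 2 * δ + γ / α * (γ - β + Real.sqrt ((β - γ) ^ 2 + 4 * α * δ)) ∧
    IsSolution α β γ δ 0 0
      (fun t => Real.sqrt (2 * α + β / δ * (β - γ + Real.sqrt ((β - γ) ^ 2 + 4 * α * δ)))
        * Real.sqrt t)
      (fun t => Real.sqrt (2 * δ + γ / α * (γ - β + Real.sqrt ((β - γ) ^ 2 + 4 * α * δ)))
        * Real.sqrt t) := by
  set R := √((β - γ) ^ 2 + 4 * α * δ)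
  have hR : R ^ 2 = (β - γ) ^ 2 + 4 * α * δ := Real.sq_sqrt (by positivity)
  have hf : 0 < β - γ + R := add_sqrt_sq_add_pos (β - γ) (by positivity : 0 < 4 * α * δ)
  set k := (β - γ + R) / (2 * δ)
  have hk : 0 < k := by positivity
  have hquad : δ * k ^ 2 = (β - γ) * k + α := by
    simp only [k]
    field_simp
    linear_combination hR
  have hpos : 0 < δ * k + γ := by
    have : δ * k + γ = (β + γ + R) / 2 := by simp only [k]; field_simp; ring
    linarith [add_add_sqrt_discr_pos hα hδ hH]
  have hA : β / δ * (β - γ + R) = 2 * β * k := by simp only [k]; field_simp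
  have hB : γ / α * (γ - β + R) = 2 * γ / k := by
    simp only [k]
    field_simp
    linear_combination γ * hR
  rw [hA, hB]
  exact pos_and_isSolution_of_quadratic hk hquad hpos
end

section
/- Assume hypothesis (H). If α > 0, δ > 0 and the positive reals c, d satisfy c/2 = α/c + β/d and d/2 = γ/c + δ/d, then d/c = (γ − β + √((β−γ)² + 4αδ)) / (2α). -/
/-! The equations force `α d² + (β - γ) c d - δ c² = 0`, so `t = d / c` is a positive root of
`α t² + (β - γ) t - δ`. Since `α > 0` and `-δ < 0`, the product of the two roots is negative and
the positive root is the one taken with `+√`. -/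

theorem eq_quadratic_root_of_pos {a b c t : ℝ} (ha : 0 < a) (hc : c ≤ 0) (ht : 0 < t)
    (h : a * (t * t) + b * t + c = 0) : t = (-b + √(discrim a b c)) / (2 * a) := by
  have hdisc : 0 ≤ discrim a b c := by
    rw [discrim]
    nlinarith [sq_nonneg b]
  rcases (quadratic_eq_zero_iff ha.ne' (Real.mul_self_sqrt hdisc).symm t).1 h
    with hplus | hminus
  · exact hplus
  · have hvertex : 2 * a * t + b = -√(discrim a b c) := by
      field_simp at hminus
      linarith
    nlinarith [Real.sqrt_nonneg (discrim a b c), mul_pos ha ht]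

theorem slope_quadratic {α β γ δ c d : ℝ} (hc : c ≠ 0) (hd : d ≠ 0)
    (h1 : c / 2 = α / c + β / d) (h2 : d / 2 = γ / c + δ / d) :
    α * (d / c * (d / c)) + (β - γ) * (d / c) + -δ = 0 := by
  field_simp at h1 h2 ⊢
  linear_combination (c * h2 - d * h1) / 2

theorem slope_value_general (α β γ δ : ℝ) (hα : 0 < α) (hδ : 0 < δ)
    (c d : ℝ) (hc : 0 < c) (hd : 0 < d)
    (h1 : c / 2 = α / c + β / d) (h2 : d / 2 = γ / c + δ / d) :
    d / c = (γ - β + Real.sqrt ((β - γ) ^ 2 + 4 * α * δ)) / (2 * α) := by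
  have hroot := eq_quadratic_root_of_pos hα (neg_nonpos.2 hδ.le) (div_pos hd hc)
    (slope_quadratic hc.ne' hd.ne' h1 h2)
  rw [hroot, discrim]
  ring_nf

/-- Under (H), if `α > 0`, `δ > 0` and positive reals `c, d` satisfy
`c/2 = α/c + β/d` and `d/2 = γ/c + δ/d`, then
`d/c = (γ − β + √((β−γ)² + 4αδ)) / (2α)`. -/
theorem slope_value (α β γ δ : ℝ) (hα : 0 < α) (hδ : 0 < δ)
    (hH : max β γ ≥ 0 ∨ β * γ < α * δ)
    (c d : ℝ) (hc : 0 < c) (hd : 0 < d)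
    (h1 : c / 2 = α / c + β / d) (h2 : d / 2 = γ / c + δ / d) :
    d / c = (γ - β + Real.sqrt ((β - γ) ^ 2 + 4 * α * δ)) / (2 * α) :=
  slope_value_general α β γ δ hα hδ c d hc hd h1 h2
end

section
/- Assume hypothesis (H). Let (x(·), y(·)) be a solution to the system starting at (x₀,y₀) ∈ S° and set θ(t) = arctan(y(t)/x(t)) and θ* = arctan(d/c). Then for all t > 0: if arctan(y₀/x₀) < θ* then θ'(t) > 0 and θ(t) < θ*; if arctan(y₀/x₀) = θ* then θ'(t) = 0 and θ(t) = θ*; and if arctan(y₀/x₀) > θ* then θ'(t) < 0 and θ(t) > θ*. -/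
/-!
For `t > 0` both coordinates are positive: under (H) some combination `p x + q y` with
`p, q > 0` is nondecreasing, so at a zero of `x` the coordinate `y` is positive, and the integral
equation then forces `x s ≤ C (t - s)` just before `t`, against the integrability of `1 / x`.
Hence `v = y / x` satisfies `v' = (δ / (u v) + α) (u - v) / x²`, where `u = d / c` is the positive
root of `α u² + (β - γ) u - δ`. This is a linear equation for `v - u` with continuous coefficient,
so `v - u` keeps its sign on `(0, ∞)`, and `θ' = v' / (1 + v²)` has the sign of `θ* - θ`.
Continuity of `θ` at `0` and the resulting monotonicity of `θ` on `[0, ∞)` carry the sign over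
to `t = 0`.
-/

open MeasureTheory

/-- The angle `θ(x, y) = arctan (y / x)` of a point of the punctured quadrant `S°`,
with the convention `θ = π/2` when `x = 0`. -/
noncomputable def thetaFun (X Y : ℝ) : ℝ :=
  if X = 0 then Real.pi / 2 else Real.arctan (Y / X)

open Set Real Filter Topology

/-- The paper's `tan θ*`; under (H) it equals `d / c` (`sqrt_div_sqrt_eq_posRoot`). -/
noncomputable def posRoot (α β γ δ : ℝ) : ℝ :=
  (γ - β + √((β - γ) ^ 2 + 4 * α * δ)) / (2 * α)

section PosRoot

variable {α β γ δ : ℝ}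

lemma posRoot_pos (hα : 0 < α) (hδ : 0 < δ) : 0 < posRoot α β γ δ := by
  have hlt : √((γ - β) ^ 2) < √((β - γ) ^ 2 + 4 * α * δ) :=
    Real.sqrt_lt_sqrt (sq_nonneg _) (by nlinarith [mul_pos hα hδ])
  rw [Real.sqrt_sq_eq_abs] at hlt
  exact div_pos (by linarith [neg_abs_le (γ - β)]) (by positivity)

lemma two_mul_posRoot (hα : 0 < α) :
    2 * α * posRoot α β γ δ = γ - β + √((β - γ) ^ 2 + 4 * α * δ) := by
  unfold posRoot
  field_simp

lemma posRoot_isRoot (hα : 0 < α) (hδ : 0 < δ) :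
    α * posRoot α β γ δ ^ 2 + (β - γ) * posRoot α β γ δ - δ = 0 := by
  have hs := Real.sq_sqrt (by positivity : 0 ≤ (β - γ) ^ 2 + 4 * α * δ)
  have hu := two_mul_posRoot (β := β) (γ := γ) (δ := δ) hα
  apply mul_left_cancel₀ (by positivity : (4 * α : ℝ) ≠ 0)
  linear_combination (2 * α * posRoot α β γ δ + (β - γ) + √((β - γ) ^ 2 + 4 * α * δ)) * hu + hs

lemma add_add_sqrt_pos (hα : 0 < α) (hδ : 0 < δ) (hH : max β γ ≥ 0 ∨ β * γ < α * δ) :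
    0 < β + γ + √((β - γ) ^ 2 + 4 * α * δ) := by
  have hs := Real.sq_sqrt (by positivity : 0 ≤ (β - γ) ^ 2 + 4 * α * δ)
  have hs0 : 0 < √((β - γ) ^ 2 + 4 * α * δ) := Real.sqrt_pos.2 (by positivity)
  rcases le_or_gt 0 (β + γ) with hsum | hsum
  · linarith
  have hprod : β * γ < α * δ := by
    rcases hH with h | h
    · rcases le_max_iff.1 h with h' | h' <;> nlinarith [mul_pos hα hδ]
    · exact h
  nlinarith

lemma sqrt_div_sqrt_eq_posRoot (hα : 0 < α) (hδ : 0 < δ)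
    (hH : max β γ ≥ 0 ∨ β * γ < α * δ) :
    √(2 * δ + γ / α * (γ - β + √((β - γ) ^ 2 + 4 * α * δ))) /
      √(2 * α + β / δ * (β - γ + √((β - γ) ^ 2 + 4 * α * δ))) = posRoot α β γ δ := by
  have hsum := add_add_sqrt_pos hα hδ hH
  have hroot := posRoot_isRoot (β := β) (γ := γ) hα hδ
  have hupos := posRoot_pos (β := β) (γ := γ) hα hδ
  have hu := two_mul_posRoot (β := β) (γ := γ) (δ := δ) hα
  set u := posRoot α β γ δ
  set s := √((β - γ) ^ 2 + 4 * α * δ)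
  set A := 2 * α + β / δ * (β - γ + s)
  have hAu : A * u = 2 * (α * u + β) := by
    have : (β - γ + s) * u = 2 * δ := by linear_combination (-u) * hu + 2 * hroot
    calc A * u = 2 * α * u + β / δ * ((β - γ + s) * u) := by ring
      _ = 2 * (α * u + β) := by rw [this]; field_simp
  have hA : 0 < A := pos_of_mul_pos_left (by rw [hAu]; linarith) hupos.le
  have hB : 2 * δ + γ / α * (γ - β + s) = A * u ^ 2 := by
    have : γ / α * (2 * α * u) = 2 * γ * u := by field_simp
    rw [← hu, this]
    linear_combination (-2) * hroot - u * hAu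
  rw [hB, Real.sqrt_mul hA.le, Real.sqrt_sq hupos.le, mul_div_cancel_left₀ _ (Real.sqrt_pos.2 hA).ne']

end PosRoot

lemma exists_pos_weights {α β γ δ : ℝ} (hα : 0 < α) (hδ : 0 < δ)
    (hH : max β γ ≥ 0 ∨ β * γ < α * δ) :
    ∃ p q : ℝ, 0 < p ∧ 0 < q ∧ 0 ≤ p * α + q * γ ∧ 0 ≤ p * β + q * δ := by
  rcases le_or_gt 0 γ with hγ | hγ
  · exact ⟨δ, |β| + 1, hδ, by positivity, by positivity, by nlinarith [neg_abs_le β]⟩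
  rcases le_or_gt 0 β with hβ | hβ
  · exact ⟨|γ| + 1, α, by positivity, hα, by nlinarith [neg_abs_le γ], by positivity⟩
  have hprod : β * γ < α * δ := hH.resolve_left (by simp [hβ, hγ])
  exact ⟨δ, -β, hδ, by linarith, by nlinarith, by nlinarith⟩

theorem eq_exp_integral_mul_of_hasDerivAt {s : Set ℝ} (hs : IsOpen s) [hs' : s.OrdConnected]
    {w k : ℝ → ℝ} (hk : ContinuousOn k s) (hw : ∀ t ∈ s, HasDerivAt w (k t * w t) t)
    {a b : ℝ} (ha : a ∈ s) (hb : b ∈ s) : w b = exp (∫ r in a..b, k r) * w a := by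
  set K := fun t => ∫ r in a..t, k r
  have hK : ∀ t ∈ s, HasDerivAt K (k t) t := fun t ht =>
    intervalIntegral.integral_hasDerivAt_right
      ((hk.mono (hs'.uIcc_subset ha ht)).intervalIntegrable)
      (hk.stronglyMeasurableAtFilter hs t ht) (hk.continuousAt (hs.mem_nhds ht))
  have hg : ∀ t ∈ s, HasDerivAt (fun t => w t * exp (-K t)) 0 t := fun t ht =>
    ((hw t ht).fun_mul (hK t ht).fun_neg.exp).congr_deriv (by ring)
  have hconst := hs.is_const_of_deriv_eq_zero hs'.isPreconnected
    (fun t ht => (hg t ht).differentiableAt.differentiableWithinAt)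
    (fun t ht => (hg t ht).deriv) hb ha
  simp only [K, intervalIntegral.integral_same, neg_zero, exp_zero, mul_one] at hconst
  rw [← hconst, mul_left_comm, ← exp_add, add_neg_cancel, exp_zero, mul_one]

lemma not_integrableOn_one_div_of_le_mul_sub {f : ℝ → ℝ} {a b C : ℝ} (hab : a < b) (hC : 0 < C)
    (hpos : ∀ᵐ s ∂volume.restrict (Ioo a b), 0 < f s) (hle : ∀ s ∈ Ioo a b, f s ≤ C * (b - s)) :
    ¬ IntegrableOn (fun s => 1 / f s) (Ioo a b) := by
  intro hf
  have hdom : IntegrableOn (fun s => (C * (b - s))⁻¹) (Ioo a b) := by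
    refine hf.mono' (by fun_prop) ?_
    filter_upwards [hpos, ae_restrict_mem measurableSet_Ioo] with s hs hsab
    rw [Real.norm_of_nonneg (by have := hsab.2; positivity), one_div]
    exact inv_anti₀ hs (hle s hsab)
  have hsub : IntervalIntegrable (fun s => (s - b)⁻¹) volume a b := by
    rw [intervalIntegrable_iff_integrableOn_Ioo_of_le hab.le]
    refine IntegrableOn.congr_fun (hdom.const_mul (-C)) (fun s _ => ?_) measurableSet_Ioo
    rw [mul_inv, ← mul_assoc, neg_mul, mul_inv_cancel₀ hC.ne', neg_one_mul, neg_inv, neg_sub]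
  simp [hab.ne] at hsub

lemma sign_arctan_sub_arctan (a b : ℝ) : SignType.sign (arctan a - arctan b) = SignType.sign (a - b) := by
  rcases lt_trichotomy a b with h | rfl | h
  · rw [sign_neg (sub_neg.2 h), sign_neg (sub_neg.2 (arctan_strictMono h))]
  · simp
  · rw [sign_pos (sub_pos.2 h), sign_pos (sub_pos.2 (arctan_strictMono h))]

lemma thetaFun_of_ne_zero {X : ℝ} (Y : ℝ) (hX : X ≠ 0) : thetaFun X Y = arctan (Y / X) :=
  if_neg hX

lemma thetaFun_eq_pi_div_two_sub {X Y : ℝ} (hX : 0 ≤ X) (hY : 0 < Y) :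
    thetaFun X Y = π / 2 - arctan (X / Y) := by
  rcases hX.eq_or_lt with rfl | hX
  · simp [thetaFun]
  rw [thetaFun_of_ne_zero Y hX.ne', ← arctan_inv_of_pos (div_pos hX hY), inv_div]

lemma ContinuousWithinAt.thetaFun {f g : ℝ → ℝ} {s : Set ℝ} {a : ℝ}
    (hf : ContinuousWithinAt f s a) (hg : ContinuousWithinAt g s a) (hf0 : ∀ t ∈ s, 0 ≤ f t)
    (ha : a ∈ s) (hpos : 0 < f a ∨ 0 < g a) :
    ContinuousWithinAt (fun t => _root_.thetaFun (f t) (g t)) s a := by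
  rcases hpos with h | h
  · have hev : ∀ᶠ t in 𝓝[s] a, 0 < f t := hf.eventually (Ioi_mem_nhds h)
    exact (continuousAt_arctan.comp_continuousWithinAt (hg.div hf h.ne')).congr_of_eventuallyEq
      (hev.mono fun t ht => thetaFun_of_ne_zero _ ht.ne') (thetaFun_of_ne_zero _ h.ne')
  · have hev : ∀ᶠ t in 𝓝[s] a, 0 < g t ∧ t ∈ s :=
      (hg.eventually (Ioi_mem_nhds h)).and self_mem_nhdsWithin
    exact (continuousWithinAt_const.sub
        (continuousAt_arctan.comp_continuousWithinAt (hf.div hg h.ne'))).congr_of_eventuallyEq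
      (hev.mono fun t ht => thetaFun_eq_pi_div_two_sub (hf0 t ht.2) ht.1)
      (thetaFun_eq_pi_div_two_sub (hf0 a ha) h)

theorem sign_sub_eq_of_sign_deriv_eq {T : ℝ → ℝ} {a c : ℝ}
    (hT0 : ContinuousWithinAt T (Ici a) a)
    (hT : ∀ t > a, ∃ T', HasDerivAt T T' t ∧ SignType.sign T' = SignType.sign (c - T t))
    (hconst : ∀ s > a, ∀ t > a, SignType.sign (T s - c) = SignType.sign (T t - c))
    {t : ℝ} (ht : a < t) : SignType.sign (T t - c) = SignType.sign (T a - c) := by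
  choose T' hT' hsign using hT
  have hcont : ContinuousOn T (Ici a) := by
    intro s hs
    rcases (mem_Ici.1 hs).eq_or_lt with rfl | hs
    · exact hT0
    · exact (hT' s hs).continuousAt.continuousWithinAt
  rcases lt_trichotomy (T t) c with h | h | h
  · have hlt : ∀ s > a, T s < c := fun s hs => by
      simpa [sign_neg (sub_neg.2 h), sign_eq_neg_one_iff] using hconst s hs t ht
    have hmono : StrictMonoOn T (Ici a) := strictMonoOn_of_deriv_pos (convex_Ici a) hcont
      fun s hs => by
        rw [interior_Ici] at hs
        rw [(hT' s hs).deriv, ← sign_eq_one_iff, hsign s hs, sign_eq_one_iff, sub_pos]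
        exact hlt s hs
    have := hmono self_mem_Ici ht.le ht
    rw [sign_neg (sub_neg.2 h), sign_neg (by linarith)]
  · have heq : ∀ s > a, T s = c := fun s hs => by
      simpa [h, sub_eq_zero] using hconst s hs t ht
    have hTa : T a = c := tendsto_nhds_unique (hT0.mono Ioi_subset_Ici_self)
      (tendsto_const_nhds.congr' (eventually_nhdsWithin_of_forall fun s hs => (heq s hs).symm))
    rw [h, hTa]
  · have hgt : ∀ s > a, c < T s := fun s hs => by
      simpa [sign_pos (sub_pos.2 h), sign_eq_one_iff] using hconst s hs t ht
    have hanti : StrictAntiOn T (Ici a) := strictAntiOn_of_deriv_neg (convex_Ici a) hcont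
      fun s hs => by
        rw [interior_Ici] at hs
        rw [(hT' s hs).deriv, ← sign_eq_neg_one_iff, hsign s hs, sign_eq_neg_one_iff, sub_neg]
        exact hgt s hs
    have := hanti self_mem_Ici ht.le ht
    rw [sign_pos (sub_pos.2 h), sign_pos (by linarith)]

lemma hasDerivAt_integral_one_div {f : ℝ → ℝ} {t : ℝ}
    (hint : IntervalIntegrable (fun s => 1 / f s) volume 0 t)
    (hf : ContinuousOn f (Ioi 0)) (hf0 : ∀ s > 0, f s ≠ 0) (ht : 0 < t) :
    HasDerivAt (fun r => ∫ s in 0..r, 1 / f s) (1 / f t) t := by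
  have hcont : ContinuousOn (fun s => 1 / f s) (Ioi 0) := continuousOn_const.div hf hf0
  exact intervalIntegral.integral_hasDerivAt_right hint
    (hcont.stronglyMeasurableAtFilter isOpen_Ioi t ht) (hcont.continuousAt (Ioi_mem_nhds ht))

namespace IsSolution

variable {α β γ δ x₀ y₀ : ℝ} {x y : ℝ → ℝ}

lemma swap (h : IsSolution α β γ δ x₀ y₀ x y) : IsSolution δ γ β α y₀ x₀ y x := by
  obtain ⟨hxc, hyc, hnn, hx0, hy0, heq⟩ := h
  refine ⟨hyc, hxc, fun t ht => (hnn t ht).symm, hy0, hx0, fun t ht => ?_⟩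
  obtain ⟨hnx, hny, hix, hiy, hx, hy⟩ := heq t ht
  exact ⟨hny, hnx, hiy, hix, by rw [hy]; ring, by rw [hx]; ring⟩

lemma fst_sub_fst (h : IsSolution α β γ δ x₀ y₀ x y) {t t' : ℝ} (ht : 0 ≤ t) (ht' : 0 ≤ t') :
    x t' - x t = α * (∫ s in t..t', 1 / x s) + β * ∫ s in t..t', 1 / y s := by
  obtain ⟨-, -, hix, hiy, hx, -⟩ := h.2.2.2.2.2 t ht
  obtain ⟨-, -, hix', hiy', hx', -⟩ := h.2.2.2.2.2 t' ht'
  rw [hx, hx', ← intervalIntegral.integral_interval_sub_left hix' hix,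
    ← intervalIntegral.integral_interval_sub_left hiy' hiy]
  ring

lemma ae_fst_pos (h : IsSolution α β γ δ x₀ y₀ x y) {t : ℝ} (ht : 0 ≤ t) :
    ∀ᵐ s ∂volume.restrict (Icc 0 t), 0 < x s := by
  rw [ae_restrict_iff' measurableSet_Icc]
  filter_upwards [measure_eq_zero_iff_ae_notMem.1 (h.2.2.2.2.2 t ht).1] with s hs hsI
  exact (h.2.2.1 s hsI.1).1.lt_of_ne fun h0 => hs ⟨hsI, h0.symm⟩

lemma fst_le_mul_sub_of_fst_eq_zero (h : IsSolution α β γ δ x₀ y₀ x y) (hα : 0 ≤ α)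
    {l t ε : ℝ} (hl : 0 ≤ l) (hxt : x t = 0) (hε : 0 < ε) (hy : ∀ s ∈ Ioc l t, ε ≤ y s)
    {s : ℝ} (hs : s ∈ Ioc l t) : x s ≤ |β| / ε * (t - s) := by
  have hs0 : 0 ≤ s := hl.trans hs.1.le
  have hsub : ∀ r ∈ Icc s t, r ∈ Ioc l t := fun r hr => ⟨hs.1.trans_le hr.1, hr.2⟩
  have hIx : 0 ≤ ∫ r in s..t, 1 / x r := intervalIntegral.integral_nonneg hs.2
    fun r hr => one_div_nonneg.2 (h.2.2.1 r (hs0.trans hr.1)).1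
  have hIy0 : 0 ≤ ∫ r in s..t, 1 / y r := intervalIntegral.integral_nonneg hs.2
    fun r hr => one_div_nonneg.2 (h.2.2.1 r (hs0.trans hr.1)).2
  have hIy : ∫ r in s..t, 1 / y r ≤ (t - s) / ε := by
    have hint : IntervalIntegrable (fun r => 1 / y r) volume s t :=
      (h.2.2.2.2.2 t (hs0.trans hs.2)).2.2.2.1.mono_set
        (by rw [uIcc_of_le hs.2, uIcc_of_le (hs0.trans hs.2)]; exact Icc_subset_Icc hs0 le_rfl)
    calc ∫ r in s..t, 1 / y r ≤ ∫ _ in s..t, 1 / ε :=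
          intervalIntegral.integral_mono_on hs.2 hint intervalIntegrable_const
            fun r hr => one_div_le_one_div_of_le hε (hy r (hsub r hr))
      _ = (t - s) / ε := by simp [div_eq_mul_inv]
  have hdiff := h.fst_sub_fst hs0 (hs0.trans hs.2)
  rw [hxt] at hdiff
  calc x s = -(α * ∫ r in s..t, 1 / x r) - β * ∫ r in s..t, 1 / y r := by linarith
    _ ≤ |β| * ((t - s) / ε) := by
      nlinarith [mul_nonneg hα hIx, mul_le_mul_of_nonneg_right (neg_abs_le β) hIy0,
        mul_le_mul_of_nonneg_left hIy (abs_nonneg β)]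
    _ = |β| / ε * (t - s) := by ring

lemma fst_pos_of_snd_pos (h : IsSolution α β γ δ x₀ y₀ x y) (hα : 0 ≤ α) {t : ℝ} (ht : 0 < t)
    (hy : 0 < y t) : 0 < x t := by
  refine (h.2.2.1 t ht.le).1.lt_of_ne' fun hxt => ?_
  have hnhds : {s | y t / 2 < y s ∧ 0 < s} ∈ 𝓝 t :=
    ((h.2.1.continuousAt (Ici_mem_nhds ht)).eventually (lt_mem_nhds (half_lt_self hy))).and
      (Ioi_mem_nhds ht)
  obtain ⟨l, hlt, hsub⟩ := exists_Ioc_subset_of_mem_nhds hnhds ⟨t - 1, by linarith⟩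
  have hl : 0 ≤ l := le_of_not_gt fun hl => lt_irrefl 0 (hsub ⟨hl, ht.le⟩).2
  have hIoo : Ioo l t ⊆ Icc 0 t := fun s hs => ⟨hl.trans hs.1.le, hs.2.le⟩
  refine not_integrableOn_one_div_of_le_mul_sub hlt (C := |β| / (y t / 2) + 1) (by positivity)
    (ae_restrict_of_ae_restrict_of_subset hIoo (h.ae_fst_pos ht.le)) (fun s hs => ?_)
    ((h.2.2.2.2.2 t ht.le).2.2.1.1.mono_set fun s hs => ⟨hl.trans_lt hs.1, hs.2.le⟩)
  have := h.fst_le_mul_sub_of_fst_eq_zero hα hl hxt (by positivity)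
    (fun s hs => (hsub hs).1.le) (Ioo_subset_Ioc_self hs)
  nlinarith [hs.2]

lemma weighted_sum_le (h : IsSolution α β γ δ x₀ y₀ x y) {p q : ℝ}
    (hp : 0 ≤ p * α + q * γ) (hq : 0 ≤ p * β + q * δ) {t : ℝ} (ht : 0 ≤ t) :
    p * x₀ + q * y₀ ≤ p * x t + q * y t := by
  obtain ⟨-, -, -, -, hx, hy⟩ := h.2.2.2.2.2 t ht
  have hIx : 0 ≤ ∫ s in 0..t, 1 / x s := intervalIntegral.integral_nonneg ht
    fun s hs => one_div_nonneg.2 (h.2.2.1 s hs.1).1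
  have hIy : 0 ≤ ∫ s in 0..t, 1 / y s := intervalIntegral.integral_nonneg ht
    fun s hs => one_div_nonneg.2 (h.2.2.1 s hs.1).2
  rw [hx, hy]
  nlinarith [mul_nonneg hp hIx, mul_nonneg hq hIy]

lemma pos_or_pos (h : IsSolution α β γ δ x₀ y₀ x y) (hα : 0 < α) (hδ : 0 < δ)
    (hH : max β γ ≥ 0 ∨ β * γ < α * δ) (hne : ¬(x₀ = 0 ∧ y₀ = 0)) {t : ℝ} (ht : 0 ≤ t) :
    0 < x t ∨ 0 < y t := by
  obtain ⟨p, q, hp, hq, hpq, hpq'⟩ := exists_pos_weights hα hδ hH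
  obtain ⟨hx₀, hy₀⟩ := h.2.2.1 0 le_rfl
  obtain ⟨hxt, hyt⟩ := h.2.2.1 t ht
  rw [h.2.2.2.1] at hx₀
  rw [h.2.2.2.2.1] at hy₀
  have := h.weighted_sum_le hpq hpq' ht
  by_contra! hle
  exact hne ⟨by nlinarith, by nlinarith⟩

lemma pos (h : IsSolution α β γ δ x₀ y₀ x y) (hα : 0 < α) (hδ : 0 < δ)
    (hH : max β γ ≥ 0 ∨ β * γ < α * δ) (hne : ¬(x₀ = 0 ∧ y₀ = 0)) {t : ℝ} (ht : 0 < t) :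
    0 < x t ∧ 0 < y t := by
  rcases h.pos_or_pos hα hδ hH hne ht.le with hx | hy
  · exact ⟨hx, h.swap.fst_pos_of_snd_pos hδ.le ht hx⟩
  · exact ⟨h.fst_pos_of_snd_pos hα.le ht hy, hy⟩

lemma hasDerivAt_fst (h : IsSolution α β γ δ x₀ y₀ x y) (hpos : ∀ s > 0, 0 < x s ∧ 0 < y s)
    {t : ℝ} (ht : 0 < t) : HasDerivAt x (α * (1 / x t) + β * (1 / y t)) t := by
  obtain ⟨hxc, hyc, -, -, -, heq⟩ := h
  have hF := hasDerivAt_integral_one_div (heq t ht.le).2.2.1 (hxc.mono Ioi_subset_Ici_self)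
    (fun s hs => (hpos s hs).1.ne') ht
  have hG := hasDerivAt_integral_one_div (heq t ht.le).2.2.2.1 (hyc.mono Ioi_subset_Ici_self)
    (fun s hs => (hpos s hs).2.ne') ht
  refine (((hF.const_mul α).fun_add (hG.const_mul β)).const_add x₀).congr_of_eventuallyEq ?_
  filter_upwards [Ioi_mem_nhds ht] with r hr
  rw [(heq r (le_of_lt hr)).2.2.2.2.1, add_assoc]


section Angle

variable (h : IsSolution α β γ δ x₀ y₀ x y) (hα : 0 < α) (hδ : 0 < δ)
  (hpos : ∀ s > 0, 0 < x s ∧ 0 < y s)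
include h hα hδ hpos

lemma hasDerivAt_snd_div_fst {t : ℝ} (ht : 0 < t) :
    HasDerivAt (fun s => y s / x s) ((δ / (posRoot α β γ δ * (y t / x t)) + α) / x t ^ 2 *
      (posRoot α β γ δ - y t / x t)) t := by
  obtain ⟨hx, hy⟩ := hpos t ht
  have hroot := posRoot_isRoot (β := β) (γ := γ) hα hδ
  have hu := (posRoot_pos (β := β) (γ := γ) hα hδ).ne'
  refine ((h.swap.hasDerivAt_fst (fun s hs => (hpos s hs).symm) ht).div
    (h.hasDerivAt_fst hpos ht) hx.ne').congr_deriv ?_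
  field_simp
  linear_combination (-(x t * y t)) * hroot

lemma exists_hasDerivAt_thetaFun {t : ℝ} (ht : 0 < t) :
    ∃ θ', HasDerivAt (fun s => thetaFun (x s) (y s)) θ' t ∧
      SignType.sign θ' = SignType.sign (arctan (posRoot α β γ δ) - thetaFun (x t) (y t)) := by
  obtain ⟨hx, hy⟩ := hpos t ht
  have hu := posRoot_pos (β := β) (γ := γ) hα hδ
  refine ⟨_, (h.hasDerivAt_snd_div_fst hα hδ hpos ht).arctan.congr_of_eventuallyEq ?_, ?_⟩
  · filter_upwards [Ioi_mem_nhds ht] with s hs using thetaFun_of_ne_zero _ (hpos s hs).1.ne'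
  · rw [thetaFun_of_ne_zero _ hx.ne', sign_arctan_sub_arctan, ← mul_assoc, sign_mul,
      sign_pos (by positivity), one_mul]

lemma sign_thetaFun_sub_eq {s t : ℝ} (hs : 0 < s) (ht : 0 < t) :
    SignType.sign (thetaFun (x s) (y s) - arctan (posRoot α β γ δ)) =
      SignType.sign (thetaFun (x t) (y t) - arctan (posRoot α β γ δ)) := by
  have hu := posRoot_pos (β := β) (γ := γ) hα hδ
  set u := posRoot α β γ δ
  have hk : ContinuousOn (fun r => -((δ / (u * (y r / x r)) + α) / x r ^ 2)) (Ioi 0) := by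
    intro r hr
    have hxc := h.1.continuousAt (Ici_mem_nhds hr)
    have hyc := h.2.1.continuousAt (Ici_mem_nhds hr)
    obtain ⟨hx, hy⟩ := hpos r hr
    exact ContinuousAt.continuousWithinAt (by fun_prop (disch := positivity))
  have hw := eq_exp_integral_mul_of_hasDerivAt isOpen_Ioi hk (w := fun r => y r / x r - u)
    (fun r hr => ((h.hasDerivAt_snd_div_fst hα hδ hpos hr).sub_const u).congr_deriv (by ring))
    ht hs
  rw [thetaFun_of_ne_zero _ (hpos s hs).1.ne', thetaFun_of_ne_zero _ (hpos t ht).1.ne',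
    sign_arctan_sub_arctan, sign_arctan_sub_arctan, hw, sign_mul, sign_pos (exp_pos _), one_mul]

end Angle

end IsSolution

theorem angular_behavior_general (α β γ δ : ℝ) (hα : 0 < α) (hδ : 0 < δ)
    (hH : max β γ ≥ 0 ∨ β * γ < α * δ)
    (c d : ℝ)
    (hc : c = Real.sqrt (2 * α + β / δ * (β - γ + Real.sqrt ((β - γ) ^ 2 + 4 * α * δ))))
    (hd : d = Real.sqrt (2 * δ + γ / α * (γ - β + Real.sqrt ((β - γ) ^ 2 + 4 * α * δ))))
    (x₀ y₀ : ℝ) (hne : ¬(x₀ = 0 ∧ y₀ = 0))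
    (x y : ℝ → ℝ) (hsol : IsSolution α β γ δ x₀ y₀ x y) :
    ∀ t > (0:ℝ),
      (thetaFun x₀ y₀ < Real.arctan (d / c) →
        (∃ θ' > (0:ℝ), HasDerivAt (fun s => thetaFun (x s) (y s)) θ' t) ∧
        thetaFun (x t) (y t) < Real.arctan (d / c)) ∧
      (thetaFun x₀ y₀ = Real.arctan (d / c) →
        HasDerivAt (fun s => thetaFun (x s) (y s)) 0 t ∧
        thetaFun (x t) (y t) = Real.arctan (d / c)) ∧
      (thetaFun x₀ y₀ > Real.arctan (d / c) →
        (∃ θ' < (0:ℝ), HasDerivAt (fun s => thetaFun (x s) (y s)) θ' t) ∧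
        thetaFun (x t) (y t) > Real.arctan (d / c)) := by
  intro t ht
  have hpos : ∀ s > 0, 0 < x s ∧ 0 < y s := fun s hs => hsol.pos hα hδ hH hne hs
  have hT0 : ContinuousWithinAt (fun s => thetaFun (x s) (y s)) (Ici 0) 0 :=
    (hsol.1 0 self_mem_Ici).thetaFun (hsol.2.1 0 self_mem_Ici) (fun s hs => (hsol.2.2.1 s hs).1)
      self_mem_Ici (hsol.pos_or_pos hα hδ hH hne le_rfl)
  have hsign := sign_sub_eq_of_sign_deriv_eq hT0
    (fun s hs => hsol.exists_hasDerivAt_thetaFun hα hδ hpos hs)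
    (fun s hs r hr => hsol.sign_thetaFun_sub_eq hα hδ hpos hs hr) ht
  obtain ⟨θ', hθ', hθ'sign⟩ := hsol.exists_hasDerivAt_thetaFun hα hδ hpos ht
  rw [hsol.2.2.2.1, hsol.2.2.2.2.1] at hsign
  rw [hc, hd, sqrt_div_sqrt_eq_posRoot hα hδ hH]
  refine ⟨fun h0 => ?_, fun h0 => ?_, fun h0 => ?_⟩
  · rw [sign_neg (sub_neg.2 h0), sign_eq_neg_one_iff, sub_neg] at hsign
    rw [sign_pos (sub_pos.2 hsign), sign_eq_one_iff] at hθ'sign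
    exact ⟨⟨θ', hθ'sign, hθ'⟩, hsign⟩
  · rw [h0, sub_self, _root_.sign_zero, _root_.sign_eq_zero_iff, sub_eq_zero] at hsign
    rw [hsign, sub_self, _root_.sign_zero, _root_.sign_eq_zero_iff] at hθ'sign
    exact ⟨hθ'sign ▸ hθ', hsign⟩
  · rw [sign_pos (sub_pos.2 h0), sign_eq_one_iff, sub_pos] at hsign
    rw [sign_neg (sub_neg.2 hsign), sign_eq_neg_one_iff] at hθ'sign
    exact ⟨⟨θ', hθ'sign, hθ'⟩, hsign⟩

/-- Under (H), for a solution starting at `(x₀, y₀) ∈ S°`, with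
`θ(t) = arctan (y(t) / x(t))` and `θ* = arctan (d / c)`, for all `t > 0`: if
`θ(0) < θ*` then `θ'(t) > 0` and `θ(t) < θ*`; if `θ(0) = θ*` then `θ'(t) = 0` and
`θ(t) = θ*`; if `θ(0) > θ*` then `θ'(t) < 0` and `θ(t) > θ*`. -/
theorem angular_behavior (α β γ δ : ℝ) (hα : 0 < α) (hδ : 0 < δ)
    (hH : max β γ ≥ 0 ∨ β * γ < α * δ)
    (c d : ℝ)
    (hc : c = Real.sqrt (2 * α + β / δ * (β - γ + Real.sqrt ((β - γ) ^ 2 + 4 * α * δ))))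
    (hd : d = Real.sqrt (2 * δ + γ / α * (γ - β + Real.sqrt ((β - γ) ^ 2 + 4 * α * δ))))
    (x₀ y₀ : ℝ) (hx₀ : 0 ≤ x₀) (hy₀ : 0 ≤ y₀) (hne : ¬(x₀ = 0 ∧ y₀ = 0))
    (x y : ℝ → ℝ) (hsol : IsSolution α β γ δ x₀ y₀ x y) :
    ∀ t > (0:ℝ),
      (thetaFun x₀ y₀ < Real.arctan (d / c) →
        (∃ θ' > (0:ℝ), HasDerivAt (fun s => thetaFun (x s) (y s)) θ' t) ∧
        thetaFun (x t) (y t) < Real.arctan (d / c)) ∧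
      (thetaFun x₀ y₀ = Real.arctan (d / c) →
        HasDerivAt (fun s => thetaFun (x s) (y s)) 0 t ∧
        thetaFun (x t) (y t) = Real.arctan (d / c)) ∧
      (thetaFun x₀ y₀ > Real.arctan (d / c) →
        (∃ θ' < (0:ℝ), HasDerivAt (fun s => thetaFun (x s) (y s)) θ' t) ∧
        thetaFun (x t) (y t) > Real.arctan (d / c)) :=
  angular_behavior_general α β γ δ hα hδ hH c d hc hd x₀ y₀ hne x y hsol
end

section
/- Assume hypothesis (H). For every (x₀, y₀) with x₀ > 0 and y₀ > 0 there exists a unique solution (x(·), y(·)) to the system starting at (x₀, y₀), and this solution satisfies x(t) > 0 and y(t) > 0 for all t ≥ 0. -/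
open MeasureTheory

/-!
Where `x, y > 0`, the clock change `dτ = dt / (x y)` turns the system into the linear system
`X' = β X + α Y`, `Y' = δ X + γ Y`. Its characteristic polynomial takes the value `-αδ < 0` at `β`,
so it has real roots `l₂ < β < l₁`, and (H) forces `l₁ > 0`. Starting from `(x₀, y₀)` the mode
`e^{l₁ τ}` enters with a positive coefficient, so `X` and `Y` stay above a positive constant for
`τ ≥ 0`; hence the clock `t = ∫ X Y dτ` runs through all of `[0, ∞)` and can be inverted.

For uniqueness, the drift `(α/x + β/y, γ/x + δ/y)` is Lipschitz on every quadrant `[m, ∞)²`, so a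
solution agrees with the positive one as long as it stays positive; at its first zero it would
still agree with the positive solution, which is absurd.
-/

open Real Set Filter

section LinearSystem

variable {α β γ δ : ℝ}

theorem exists_charRoots (hα : 0 < α) (hδ : 0 < δ) (hH : max β γ ≥ 0 ∨ β * γ < α * δ) :
    ∃ l₁ l₂ : ℝ, l₁ ^ 2 - (β + γ) * l₁ + (β * γ - α * δ) = 0 ∧
      l₂ ^ 2 - (β + γ) * l₂ + (β * γ - α * δ) = 0 ∧ l₂ < β ∧ β < l₁ ∧ 0 < l₁ := by
  set D := √((β - γ) ^ 2 + 4 * α * δ)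
  have hD : D ^ 2 = (β - γ) ^ 2 + 4 * α * δ := sq_sqrt (by positivity)
  have hD_gt : |β - γ| < D := by
    rw [← sqrt_sq_eq_abs]
    exact sqrt_lt_sqrt (sq_nonneg _) (by nlinarith)
  obtain ⟨hβγ, hγβ⟩ := abs_lt.1 hD_gt
  refine ⟨(β + γ + D) / 2, (β + γ - D) / 2, by linear_combination hD / 4,
    by linear_combination hD / 4, by linarith, by linarith, ?_⟩
  rcases hH with h | h
  · rcases le_max_iff.1 h with h | h <;> linarith
  · nlinarith

theorem min_le_mul_exp_add_mul_exp {a b l m τ : ℝ} (ha : 0 ≤ a) (hab : 0 ≤ a + b)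
    (hl : 0 ≤ l) (hml : m ≤ l) (hτ : 0 ≤ τ) :
    min a (a + b) ≤ a * exp (l * τ) + b * exp (m * τ) := by
  have h1 : 1 ≤ exp (l * τ) := one_le_exp (by positivity)
  have h2 : exp (m * τ) ≤ exp (l * τ) := exp_le_exp.2 (by nlinarith)
  have h3 := exp_pos (m * τ)
  rcases le_total 0 b with hb | hb
  · nlinarith [min_le_left a (a + b)]
  · nlinarith [min_le_right a (a + b)]

theorem hasDerivAt_mul_exp_add_mul_exp (a b l m τ : ℝ) :
    HasDerivAt (fun τ => a * exp (l * τ) + b * exp (m * τ))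
      (a * l * exp (l * τ) + b * m * exp (m * τ)) τ := by
  have hl := ((hasDerivAt_id' τ).const_mul l).exp.const_mul a
  have hm := ((hasDerivAt_id' τ).const_mul m).exp.const_mul b
  exact (hl.add hm).congr_deriv (by ring)

theorem exists_linearSolution (hα : 0 < α) (hδ : 0 < δ) (hH : max β γ ≥ 0 ∨ β * γ < α * δ)
    {x₀ y₀ : ℝ} (hx₀ : 0 < x₀) (hy₀ : 0 < y₀) :
    ∃ X Y : ℝ → ℝ, X 0 = x₀ ∧ Y 0 = y₀ ∧
      (∀ τ, HasDerivAt X (β * X τ + α * Y τ) τ) ∧ (∀ τ, HasDerivAt Y (δ * X τ + γ * Y τ) τ) ∧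
      ∃ c > 0, ∀ τ ≥ 0, c ≤ X τ ∧ c ≤ Y τ := by
  obtain ⟨l₁, l₂, hl₁, hl₂, hl₂β, hβl₁, hl₁pos⟩ := exists_charRoots hα hδ hH
  -- each root `l` has the eigenvector `(α, l - β)`; `c₁, c₂` fit the initial data
  set c₁ := (α * y₀ + (β - l₂) * x₀) / (α * (l₁ - l₂))
  set c₂ := x₀ / α - c₁
  have hc₁ : 0 < c₁ := div_pos (by nlinarith) (by nlinarith)
  have hl₁₂ : l₁ - l₂ ≠ 0 := by linarith
  have hy_init : c₁ * (l₁ - β) + c₂ * (l₂ - β) = y₀ := by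
    simp only [c₂, c₁]; field_simp; ring
  refine ⟨fun τ => α * c₁ * exp (l₁ * τ) + α * c₂ * exp (l₂ * τ),
    fun τ => c₁ * (l₁ - β) * exp (l₁ * τ) + c₂ * (l₂ - β) * exp (l₂ * τ),
    by simp only [c₂]; field_simp; simp, by simpa using hy_init, fun τ => ?_, fun τ => ?_,
    min (min (α * c₁) x₀) (min (c₁ * (l₁ - β)) y₀), by positivity, fun τ hτ => ⟨?_, ?_⟩⟩
  · convert hasDerivAt_mul_exp_add_mul_exp _ _ l₁ l₂ τ using 1; ring
  · convert hasDerivAt_mul_exp_add_mul_exp _ _ l₁ l₂ τ using 1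
    linear_combination (-c₁ * exp (l₁ * τ)) * hl₁ - c₂ * exp (l₂ * τ) * hl₂
  · have hx : α * c₁ + α * c₂ = x₀ := by simp only [c₂]; field_simp; ring
    refine (min_le_left _ _).trans ?_
    have := min_le_mul_exp_add_mul_exp (a := α * c₁) (b := α * c₂) (m := l₂) (by positivity)
      (by linarith) hl₁pos.le (by linarith) hτ
    rwa [hx] at this
  · refine (min_le_right _ _).trans ?_
    have := min_le_mul_exp_add_mul_exp (a := c₁ * (l₁ - β)) (b := c₂ * (l₂ - β)) (m := l₂)
      (mul_pos hc₁ (by linarith)).le (by linarith) hl₁pos.le (by linarith) hτ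
    rwa [hy_init] at this

end LinearSystem

theorem exists_timeChange {f : ℝ → ℝ} {c : ℝ} (hf : Continuous f) (hc : 0 < c)
    (hfc : ∀ τ, c ≤ f τ) :
    ∃ σ : ℝ → ℝ, σ 0 = 0 ∧ Monotone σ ∧ ∀ t, HasDerivAt σ (f (σ t))⁻¹ t := by
  set T : ℝ → ℝ := fun τ => ∫ s in (0 : ℝ)..τ, f s
  have hT : ∀ τ, HasDerivAt T (f τ) τ := fun τ => (hf.integral_hasStrictDerivAt 0 τ).hasDerivAt
  have hT_mono : StrictMono T := strictMono_of_hasDerivAt_pos hT fun τ => hc.trans_le (hfc τ)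
  have hT0 : T 0 = 0 := intervalIntegral.integral_same
  have hlin : Monotone fun τ => T τ - c * τ :=
    monotone_of_hasDerivAt_nonneg (fun τ => (hT τ).sub ((hasDerivAt_id' τ).const_mul c))
      fun τ => by simpa using hfc τ
  have htop : Tendsto T atTop atTop := by
    refine tendsto_atTop_mono' _ ?_ (tendsto_id.const_mul_atTop hc)
    filter_upwards [eventually_ge_atTop 0] with τ hτ
    show c * τ ≤ T τ
    linarith [hlin hτ]
  have hbot : Tendsto T atBot atBot := by
    refine tendsto_atBot_mono' _ ?_ (tendsto_id.const_mul_atBot hc)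
    filter_upwards [eventually_le_atBot 0] with τ hτ
    show T τ ≤ c * τ
    linarith [hlin hτ]
  let e := hT_mono.orderIsoOfSurjective T
    ((continuous_iff_continuousAt.2 fun τ => (hT τ).continuousAt).surjective htop hbot)
  refine ⟨e.symm, e.symm_apply_eq.2 hT0.symm, e.symm.monotone, fun t => ?_⟩
  exact HasDerivAt.of_local_left_inverse e.symm.continuous.continuousAt (hT _)
    (hc.trans_le (hfc _)).ne' (Eventually.of_forall e.apply_symm_apply)

theorem exists_classicalSolution {α β γ δ : ℝ} (hα : 0 < α) (hδ : 0 < δ)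
    (hH : max β γ ≥ 0 ∨ β * γ < α * δ) {x₀ y₀ : ℝ} (hx₀ : 0 < x₀) (hy₀ : 0 < y₀) :
    ∃ x y : ℝ → ℝ, x 0 = x₀ ∧ y 0 = y₀ ∧ (∀ t ≥ 0, 0 < x t ∧ 0 < y t) ∧
      (∀ t ≥ 0, HasDerivAt x (α * (1 / x t) + β * (1 / y t)) t) ∧
      ∀ t ≥ 0, HasDerivAt y (γ * (1 / x t) + δ * (1 / y t)) t := by
  obtain ⟨X, Y, hX0, hY0, hX, hY, c, hc, hXY⟩ := exists_linearSolution hα hδ hH hx₀ hy₀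
  have hXc : Continuous X := continuous_iff_continuousAt.2 fun τ => (hX τ).continuousAt
  have hYc : Continuous Y := continuous_iff_continuousAt.2 fun τ => (hY τ).continuousAt
  -- `x = X ∘ σ` with `dσ/dt = 1 / (X Y)(σ)`; the clamp `max · (c * c)` is inactive for `τ ≥ 0`
  obtain ⟨σ, hσ0, hσ_mono, hσ⟩ := exists_timeChange (f := fun τ => max (X τ * Y τ) (c * c))
    ((hXc.mul hYc).max continuous_const)
    (mul_pos hc hc) fun τ => le_max_right (X τ * Y τ) (c * c)
  have hσ_nonneg : ∀ t ≥ 0, 0 ≤ σ t := fun t ht => hσ0 ▸ hσ_mono ht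
  have hpos : ∀ t ≥ 0, 0 < X (σ t) ∧ 0 < Y (σ t) := fun t ht =>
    ⟨hc.trans_le (hXY _ (hσ_nonneg t ht)).1, hc.trans_le (hXY _ (hσ_nonneg t ht)).2⟩
  have hclamp : ∀ t ≥ 0, max (X (σ t) * Y (σ t)) (c * c) = X (σ t) * Y (σ t) := fun t ht =>
    max_eq_left (mul_le_mul (hXY _ (hσ_nonneg t ht)).1 (hXY _ (hσ_nonneg t ht)).2 hc.le
      (hpos t ht).1.le)
  have hrate : ∀ t ≥ 0, ∀ p q : ℝ, (p * X (σ t) + q * Y (σ t)) * (max (X (σ t) * Y (σ t)) (c * c))⁻¹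
      = q * (1 / X (σ t)) + p * (1 / Y (σ t)) := fun t ht p q => by
    rw [hclamp t ht]
    field_simp [(hpos t ht).1.ne', (hpos t ht).2.ne']
    ring
  exact ⟨X ∘ σ, Y ∘ σ, by simp [hσ0, hX0], by simp [hσ0, hY0], hpos,
    fun t ht => ((hX (σ t)).comp t (hσ t)).congr_deriv (hrate t ht β α),
    fun t ht => ((hY (σ t)).comp t (hσ t)).congr_deriv (hrate t ht δ γ)⟩

theorem eq_add_mul_integral_add_mul_integral {x u v : ℝ → ℝ} {a b t : ℝ}
    (hu : ContinuousOn u (uIcc 0 t)) (hv : ContinuousOn v (uIcc 0 t))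
    (hx : ∀ s ∈ uIcc 0 t, HasDerivAt x (a * u s + b * v s) s) :
    x t = x 0 + a * (∫ s in (0 : ℝ)..t, u s) + b * ∫ s in (0 : ℝ)..t, v s := by
  have hui : IntervalIntegrable u volume 0 t := hu.intervalIntegrable
  have hvi : IntervalIntegrable v volume 0 t := hv.intervalIntegrable
  have hftc := intervalIntegral.integral_eq_sub_of_hasDerivAt hx
    ((hui.const_mul a).add (hvi.const_mul b))
  rw [intervalIntegral.integral_add (hui.const_mul a) (hvi.const_mul b),
    intervalIntegral.integral_const_mul, intervalIntegral.integral_const_mul] at hftc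
  linarith

theorem continuousOn_one_div_of_pos {z : ℝ → ℝ} (hz : ContinuousOn z (Ici 0))
    (hpos : ∀ t ≥ 0, 0 < z t) (t : ℝ) (ht : 0 ≤ t) :
    ContinuousOn (fun s => 1 / z s) (uIcc 0 t) := by
  rw [uIcc_of_le ht]
  exact continuousOn_const.div (hz.mono Icc_subset_Ici_self) fun s hs => (hpos s hs.1).ne'

theorem isSolution_of_hasDerivAt {α β γ δ : ℝ} {x y : ℝ → ℝ}
    (hpos : ∀ t ≥ 0, 0 < x t ∧ 0 < y t)
    (hx : ∀ t ≥ 0, HasDerivAt x (α * (1 / x t) + β * (1 / y t)) t)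
    (hy : ∀ t ≥ 0, HasDerivAt y (γ * (1 / x t) + δ * (1 / y t)) t) :
    IsSolution α β γ δ (x 0) (y 0) x y := by
  have hxc : ContinuousOn x (Ici 0) := fun t ht => (hx t ht).continuousAt.continuousWithinAt
  have hyc : ContinuousOn y (Ici 0) := fun t ht => (hy t ht).continuousAt.continuousWithinAt
  have hx' := continuousOn_one_div_of_pos hxc fun t ht => (hpos t ht).1
  have hy' := continuousOn_one_div_of_pos hyc fun t ht => (hpos t ht).2
  refine ⟨hxc, hyc, fun t ht => ⟨(hpos t ht).1.le, (hpos t ht).2.le⟩, rfl, rfl, fun t ht =>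
    ⟨measure_mono_null (fun s hs => (hpos s hs.1.1).1.ne' hs.2) measure_empty,
      measure_mono_null (fun s hs => (hpos s hs.1.1).2.ne' hs.2) measure_empty,
      (hx' t ht).intervalIntegrable, (hy' t ht).intervalIntegrable, ?_, ?_⟩⟩
  all_goals
    refine eq_add_mul_integral_add_mul_integral (hx' t ht) (hy' t ht) fun s hs => ?_
    rw [uIcc_of_le ht] at hs
  exacts [hx s hs.1, hy s hs.1]

noncomputable def drift (α β γ δ : ℝ) (p : ℝ × ℝ) : ℝ × ℝ :=
  (α * (1 / p.1) + β * (1 / p.2), γ * (1 / p.1) + δ * (1 / p.2))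

theorem lipschitzOnWith_one_div_Ici {m : ℝ} (hm : 0 < m) :
    LipschitzOnWith (Real.toNNReal (m ^ 2)⁻¹) (fun a : ℝ => 1 / a) (Ici m) := by
  rw [lipschitzOnWith_iff_dist_le_mul]
  intro a (ha : m ≤ a) b (hb : m ≤ b)
  have ha0 := hm.trans_le ha
  have hb0 := hm.trans_le hb
  have hdiff : 1 / a - 1 / b = (b - a) / (a * b) := by field_simp
  rw [Real.coe_toNNReal _ (by positivity), dist_eq, dist_eq, hdiff, abs_div,
    abs_of_pos (mul_pos ha0 hb0), abs_sub_comm, div_eq_mul_inv, mul_comm]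
  gcongr
  nlinarith

theorem exists_lipschitzOnWith_drift (α β γ δ : ℝ) {m : ℝ} (hm : 0 < m) :
    ∃ K, LipschitzOnWith K (drift α β γ δ) (Ici m ×ˢ Ici m) := by
  have h₁ : LipschitzOnWith _ (fun p : ℝ × ℝ => 1 / p.1) (Ici m ×ˢ Ici m) :=
    (lipschitzOnWith_one_div_Ici hm).comp LipschitzWith.prod_fst.lipschitzOnWith fun p hp => hp.1
  have h₂ : LipschitzOnWith _ (fun p : ℝ × ℝ => 1 / p.2) (Ici m ×ˢ Ici m) :=
    (lipschitzOnWith_one_div_Ici hm).comp LipschitzWith.prod_snd.lipschitzOnWith fun p hp => hp.2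
  have hcomb (a b : ℝ) := ((lipschitzWith_smul a).comp_lipschitzOnWith h₁).add
    ((lipschitzWith_smul b).comp_lipschitzOnWith h₂)
  exact ⟨_, (hcomb α β).prodMk (hcomb γ δ)⟩

theorem hasDerivWithinAt_integral_one_div {z : ℝ → ℝ} {t : ℝ} (hz : ContinuousOn z (Ici 0))
    (hint : ∀ u ≥ 0, IntervalIntegrable (fun s => 1 / z s) volume 0 u) (ht : 0 ≤ t)
    (hzt : z t ≠ 0) :
    HasDerivWithinAt (fun u => ∫ s in (0 : ℝ)..u, 1 / z s) (1 / z t) (Ici t) t :=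
  intervalIntegral.integral_hasDerivWithinAt_right (hint t ht)
    ⟨Ioc 0 (t + 1), Ioc_mem_nhdsGT_of_mem ⟨ht, by linarith⟩,
      (hint (t + 1) (by linarith)).1.aestronglyMeasurable⟩
    (continuousWithinAt_const.div ((hz t ht).mono fun s (hs : t < s) => ht.trans hs.le) hzt)

theorem exists_first_zero {f : ℝ → ℝ} {a t : ℝ} (hf : ContinuousOn f (Icc a t)) (hat : a ≤ t)
    (ha : f a ≠ 0) (ht : f t = 0) : ∃ t₀ ∈ Ioc a t, f t₀ = 0 ∧ ∀ s ∈ Ico a t₀, f s ≠ 0 := by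
  have hZ : IsCompact (Icc a t ∩ f ⁻¹' {0}) := isCompact_Icc.of_isClosed_subset
    (hf.preimage_isClosed_of_isClosed isClosed_Icc isClosed_singleton) inter_subset_left
  obtain ⟨t₀, ⟨ht₀, hft₀⟩, hleast⟩ := hZ.exists_isLeast ⟨t, ⟨hat, le_rfl⟩, ht⟩
  refine ⟨t₀, ⟨lt_of_le_of_ne ht₀.1 fun h => ha (h ▸ hft₀), ht₀.2⟩, hft₀, fun s hs hfs => ?_⟩
  exact (hleast ⟨⟨hs.1, hs.2.le.trans ht₀.2⟩, hfs⟩).not_gt hs.2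

namespace IsSolution

variable {α β γ δ x₀ y₀ : ℝ} {x y x' y' : ℝ → ℝ}

theorem hasDerivWithinAt (h : IsSolution α β γ δ x₀ y₀ x y) {t : ℝ} (ht : 0 ≤ t)
    (hpos : 0 < x t ∧ 0 < y t) :
    HasDerivWithinAt (fun s => (x s, y s)) (drift α β γ δ (x t, y t)) (Ici t) t := by
  obtain ⟨hxc, hyc, -, -, -, hsol⟩ := h
  have hIx := hasDerivWithinAt_integral_one_div hxc (fun u hu => (hsol u hu).2.2.1) ht hpos.1.ne'
  have hIy := hasDerivWithinAt_integral_one_div hyc (fun u hu => (hsol u hu).2.2.2.1) ht hpos.2.ne'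
  refine HasDerivWithinAt.prodMk ?_ ?_
  · refine (((hIx.const_mul α).const_add x₀).add (hIy.const_mul β)).congr
      (fun s hs => (hsol s (ht.trans hs)).2.2.2.2.1) (hsol t ht).2.2.2.2.1
  · refine (((hIx.const_mul γ).const_add y₀).add (hIy.const_mul δ)).congr
      (fun s hs => (hsol s (ht.trans hs)).2.2.2.2.2) (hsol t ht).2.2.2.2.2

theorem eq_of_pos_on_Icc (h : IsSolution α β γ δ x₀ y₀ x y)
    (h' : IsSolution α β γ δ x₀ y₀ x' y') {T : ℝ} (hT : 0 ≤ T)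
    (hpos : ∀ s ∈ Icc 0 T, 0 < x s ∧ 0 < y s) (hpos' : ∀ s ∈ Icc 0 T, 0 < x' s ∧ 0 < y' s) :
    ∀ t ∈ Icc 0 T, x' t = x t ∧ y' t = y t := by
  have hIcc : Icc (0 : ℝ) T ⊆ Ici 0 := Icc_subset_Ici_self
  have hc := (h.1.mono hIcc).prodMk (h.2.1.mono hIcc)
  have hc' := (h'.1.mono hIcc).prodMk (h'.2.1.mono hIcc)
  obtain ⟨s₀, hs₀, hmin⟩ := isCompact_Icc.exists_isMinOn (nonempty_Icc.2 hT)
    (f := fun s => min (min (x s) (y s)) (min (x' s) (y' s)))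
    (((h.1.mono hIcc).inf (h.2.1.mono hIcc)).inf ((h'.1.mono hIcc).inf (h'.2.1.mono hIcc)))
  set m := min (min (x s₀) (y s₀)) (min (x' s₀) (y' s₀))
  have hm : 0 < m := by
    obtain ⟨h₁, h₂⟩ := hpos s₀ hs₀
    obtain ⟨h₃, h₄⟩ := hpos' s₀ hs₀
    positivity
  have hmem : ∀ s ∈ Icc 0 T, (x s, y s) ∈ Ici m ×ˢ Ici m ∧ (x' s, y' s) ∈ Ici m ×ˢ Ici m := by
    intro s hs
    have := hmin hs
    simp only [mem_ofPred_eq, le_min_iff, mem_prod, mem_Ici] at this ⊢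
    grind
  obtain ⟨K, hK⟩ := exists_lipschitzOnWith_drift α β γ δ hm
  have hIco : Ico (0 : ℝ) T ⊆ Icc 0 T := Ico_subset_Icc_self
  have heq := ODE_solution_unique_of_mem_Icc_right (v := fun _ => drift α β γ δ) (fun _ _ => hK)
    hc' (fun s hs => h'.hasDerivWithinAt hs.1 (hpos' s (hIco hs)))
    (fun s hs => (hmem s (hIco hs)).2)
    hc (fun s hs => h.hasDerivWithinAt hs.1 (hpos s (hIco hs)))
    (fun s hs => (hmem s (hIco hs)).1)
    (by rw [h.2.2.2.1, h.2.2.2.2.1, h'.2.2.2.1, h'.2.2.2.2.1])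
  exact fun t ht => Prod.mk.inj (heq ht)

theorem pos_of_pos (h : IsSolution α β γ δ x₀ y₀ x y) (hpos : ∀ t ≥ 0, 0 < x t ∧ 0 < y t)
    (h' : IsSolution α β γ δ x₀ y₀ x' y') : ∀ t ≥ 0, 0 < x' t ∧ 0 < y' t := by
  have hpos_iff : ∀ t ≥ 0, (0 < x' t ∧ 0 < y' t) ↔ x' t * y' t ≠ 0 := fun t ht => by
    obtain ⟨hx, hy⟩ := h'.2.2.1 t ht
    rw [mul_ne_zero_iff, hx.lt_iff_ne', hy.lt_iff_ne']
  intro t ht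
  by_contra hneg
  rw [hpos_iff t ht, not_not] at hneg
  have hprod_cont : ContinuousOn (fun s => x' s * y' s) (Icc 0 t) :=
    (h'.1.mono Icc_subset_Ici_self).mul (h'.2.1.mono Icc_subset_Ici_self)
  have h0 : x' 0 * y' 0 ≠ 0 := by
    rw [h'.2.2.2.1, h'.2.2.2.2.1, ← h.2.2.2.1, ← h.2.2.2.2.1]
    exact mul_ne_zero (hpos 0 le_rfl).1.ne' (hpos 0 le_rfl).2.ne'
  obtain ⟨t₀, ht₀, hzero, hbefore⟩ := exists_first_zero hprod_cont ht h0 hneg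
  have hpos' : ∀ s ∈ Ico 0 t₀, 0 < x' s ∧ 0 < y' s := fun s hs =>
    (hpos_iff s hs.1).2 (hbefore s hs)
  have heq : EqOn (fun s => (x' s, y' s)) (fun s => (x s, y s)) (Ico 0 t₀) := fun s hs =>
    Prod.ext_iff.2 (h.eq_of_pos_on_Icc h' hs.1 (fun r hr => hpos r hr.1)
      (fun r hr => hpos' r ⟨hr.1, hr.2.trans_lt hs.2⟩) s ⟨hs.1, le_rfl⟩)
  have hIcc : Icc (0 : ℝ) t₀ ⊆ Ici 0 := Icc_subset_Ici_self
  have heq₀ := heq.of_subset_closure ((h'.1.mono hIcc).prodMk (h'.2.1.mono hIcc))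
    ((h.1.mono hIcc).prodMk (h.2.1.mono hIcc)) Ico_subset_Icc_self
    (closure_Ico ht₀.1.ne).ge ⟨ht₀.1.le, le_rfl⟩
  obtain ⟨hx, hy⟩ := Prod.mk.inj heq₀
  rw [hx, hy] at hzero
  exact mul_ne_zero (hpos t₀ ht₀.1.le).1.ne' (hpos t₀ ht₀.1.le).2.ne' hzero

end IsSolution

/-- Under (H), for every `(x₀, y₀)` with `x₀ > 0`, `y₀ > 0` there exists a
unique solution starting at `(x₀, y₀)`, and it satisfies `x(t) > 0` and `y(t) > 0` for
all `t ≥ 0`. -/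
theorem existence_uniqueness_interior (α β γ δ : ℝ) (hα : 0 < α) (hδ : 0 < δ)
    (hH : max β γ ≥ 0 ∨ β * γ < α * δ)
    (x₀ y₀ : ℝ) (hx₀ : 0 < x₀) (hy₀ : 0 < y₀) :
    ∃ x y : ℝ → ℝ, IsSolution α β γ δ x₀ y₀ x y ∧
      (∀ t ≥ (0:ℝ), 0 < x t ∧ 0 < y t) ∧
      ∀ x' y' : ℝ → ℝ, IsSolution α β γ δ x₀ y₀ x' y' →
        ∀ t ≥ (0:ℝ), x' t = x t ∧ y' t = y t := by
  obtain ⟨x, y, rfl, rfl, hpos, hx, hy⟩ := exists_classicalSolution hα hδ hH hx₀ hy₀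
  have hsol := isSolution_of_hasDerivAt hpos hx hy
  refine ⟨x, y, hsol, hpos, fun x' y' h' t ht => ?_⟩
  exact hsol.eq_of_pos_on_Icc h' ht (fun s hs => hpos s hs.1)
    (fun s hs => hsol.pos_of_pos hpos h' s hs.1) t ⟨ht, le_rfl⟩
end

section
/- Assume hypothesis (H) and fix λ > 0, μ > 0 with λα + μγ > 0 and λβ + μδ > 0. Let (x(·), y(·)) be a solution to the system starting at (x₀, y₀) ∈ S with λx₀ + μy₀ ≤ r for some r > 0, and set τ(r) := inf{t ≥ 0 : λx(t) + μy(t) = r}. Then τ(r) ≤ r² / (2[λ(λα + μγ) + μ(λβ + μδ)]); in particular τ(r) is finite. -/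
/-!
Along a solution, `z = lam * x + mu * y` is `z 0` plus the primitive of the nonnegative rate
`ρ = (lam * α + mu * γ) / x + (lam * β + mu * δ) / y`, and `z * ρ ≥ C` wherever `x, y > 0`, i.e.
almost everywhere. Formally `(z²)' = 2 z ρ ≥ 2 C`, so `z(T)² ≥ r²` at `T = r² / (2 C)`, and the
intermediate value theorem gives a hitting time in `[0, T]`. Since `z` is only absolutely
continuous, the chain rule for `z²` is replaced by the Fubini inequality
`2 ∫₀ᵀ (∫₀ᵘ ρ) ρ(u) du ≤ (∫₀ᵀ ρ)²`.
-/

open MeasureTheory Set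

theorem add_le_add_mul_div_add_div {l m A B x y : ℝ} (hl : 0 ≤ l) (hm : 0 ≤ m) (hA : 0 ≤ A)
    (hB : 0 ≤ B) (hx : 0 < x) (hy : 0 < y) :
    l * A + m * B ≤ (l * x + m * y) * (A / x + B / y) := by
  have hexpand : (l * x + m * y) * (A / x + B / y)
      = l * A + m * B + (l * B * (x / y) + m * A * (y / x)) := by
    field_simp
    ring
  rw [hexpand]
  have : 0 ≤ l * B * (x / y) + m * A * (y / x) := by positivity
  linarith

theorem exists_hitting_time_le {f : ℝ → ℝ} {r T : ℝ} (hT : 0 ≤ T)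
    (hf : ContinuousOn f (Icc 0 T)) (h0 : f 0 ≤ r) (hrT : r ≤ f T) :
    {t | 0 ≤ t ∧ f t = r}.Nonempty ∧ sInf {t | 0 ≤ t ∧ f t = r} ≤ T := by
  obtain ⟨t, ⟨ht0, htT⟩, hft⟩ := intermediate_value_Icc hT hf ⟨h0, hrT⟩
  have ht : t ∈ {t | 0 ≤ t ∧ f t = r} := ⟨ht0, hft⟩
  exact ⟨⟨t, ht⟩, (csInf_le ⟨0, fun _ hs => hs.1⟩ ht).trans htT⟩

theorem two_mul_integral_primitive_mul_le_sq {g : ℝ → ℝ} {a b : ℝ} (hab : a ≤ b)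
    (hg : IntervalIntegrable g volume a b) :
    2 * ∫ u in a..b, (∫ v in a..u, g v) * g u ≤ (∫ u in a..b, g u) ^ 2 := by
  set μ := volume.restrict (Ioc a b)
  have hg' : Integrable g μ := (intervalIntegrable_iff_integrableOn_Ioc_of_le hab).mp hg
  set F := {p : ℝ × ℝ | p.2 < p.1}.indicator fun p => g p.1 * g p.2
  have hF : Integrable F (μ.prod μ) :=
    (hg'.mul_prod hg').indicator (measurableSet_lt measurable_snd measurable_fst)
  -- `F` and its reflection cover the square up to the diagonal, where `g ⊗ g` is a square.
  have hF_add_swap : ∀ p : ℝ × ℝ, F p + F p.swap ≤ g p.1 * g p.2 := by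
    rintro ⟨u, v⟩
    rcases lt_trichotomy u v with h | rfl | h
    · simp [F, h, h.not_gt, mul_comm]
    · simpa [F] using mul_self_nonneg (g u)
    · simp [F, h, h.not_gt]
  have hF_iter : ∫ p, F p ∂(μ.prod μ) = ∫ u in a..b, (∫ v in a..u, g v) * g u := by
    rw [integral_prod F hF, intervalIntegral.integral_of_le hab]
    refine integral_congr_ae ?_
    filter_upwards [ae_restrict_mem measurableSet_Ioc] with u hu
    have hslice : (fun v => F (u, v)) = fun v => (Iio u).indicator g v * g u := by
      funext v
      by_cases h : v < u <;> simp [F, h, mul_comm]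
    have hIoo : Iio u ∩ Ioc a b = Ioo a u := by
      ext v
      exact ⟨fun ⟨hvu, hav, _⟩ => ⟨hav, hvu⟩, fun ⟨hav, hvu⟩ => ⟨hvu, hav, hvu.le.trans hu.2⟩⟩
    rw [hslice, integral_mul_const, integral_indicator measurableSet_Iio,
      Measure.restrict_restrict measurableSet_Iio, hIoo, ← integral_Ioc_eq_integral_Ioo,
      intervalIntegral.integral_of_le hu.1.le]
  calc 2 * ∫ u in a..b, (∫ v in a..u, g v) * g u
      = ∫ p, (F p + F p.swap) ∂(μ.prod μ) := by
        rw [integral_add hF (hF.swap : Integrable (fun p => F p.swap) _), integral_prod_swap F,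
          hF_iter]
        ring
    _ ≤ ∫ p, g p.1 * g p.2 ∂(μ.prod μ) :=
        integral_mono (hF.add hF.swap) (hg'.mul_prod hg') hF_add_swap
    _ = (∫ u in a..b, g u) ^ 2 := by
        rw [integral_prod_mul, intervalIntegral.integral_of_le hab]; ring

theorem sq_add_two_mul_le_sq_of_le_mul_integrand {ρ : ℝ → ℝ} {a b z₀ C : ℝ} (hab : a ≤ b)
    (hρ : IntervalIntegrable ρ volume a b)
    (hC : ∀ᵐ u ∂volume.restrict (Ioc a b), C ≤ (z₀ + ∫ v in a..u, ρ v) * ρ u) :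
    z₀ ^ 2 + 2 * C * (b - a) ≤ (z₀ + ∫ v in a..b, ρ v) ^ 2 := by
  set G := fun u => ∫ v in a..u, ρ v
  have hG : ContinuousOn G (uIcc a b) :=
    intervalIntegral.continuousOn_primitive_interval' hρ left_mem_uIcc
  have hGρ : IntervalIntegrable (fun u => G u * ρ u) volume a b := hρ.continuousOn_mul hG
  have hlower : C * (b - a) ≤ ∫ u in a..b, (z₀ + G u) * ρ u := by
    have hzρ : IntervalIntegrable (fun u => (z₀ + G u) * ρ u) volume a b :=
      hρ.continuousOn_mul (continuousOn_const.add hG)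
    calc C * (b - a) = ∫ _ in a..b, C := by simp [mul_comm]
      _ ≤ _ := by
        simp only [intervalIntegral.integral_of_le hab]
        exact setIntegral_mono_ae_restrict (intervalIntegrable_const.1) hzρ.1 hC
  have hsplit : ∫ u in a..b, (z₀ + G u) * ρ u = z₀ * G b + ∫ u in a..b, G u * ρ u := by
    simp_rw [add_mul]
    rw [intervalIntegral.integral_add (hρ.const_mul z₀) hGρ, intervalIntegral.integral_const_mul]
  nlinarith [two_mul_integral_primitive_mul_le_sq hab hρ]

namespace IsSolution

variable {α β γ δ x₀ y₀ : ℝ} {x y : ℝ → ℝ}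

theorem intervalIntegrable_div_add_div (hsol : IsSolution α β γ δ x₀ y₀ x y) (A B : ℝ)
    {t : ℝ} (ht : 0 ≤ t) : IntervalIntegrable (fun s => A / x s + B / y s) volume 0 t := by
  obtain ⟨-, -, hx, hy, -⟩ := hsol.2.2.2.2.2 t ht
  simpa only [div_eq_mul_one_div A, div_eq_mul_one_div B] using
    (hx.const_mul A).add (hy.const_mul B)

theorem linear_comb_eq (hsol : IsSolution α β γ δ x₀ y₀ x y) (l m : ℝ) {t : ℝ} (ht : 0 ≤ t) :
    l * x t + m * y t = l * x₀ + m * y₀ +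
      ∫ s in (0:ℝ)..t, ((l * α + m * γ) / x s + (l * β + m * δ) / y s) := by
  obtain ⟨-, -, hx, hy, hxt, hyt⟩ := hsol.2.2.2.2.2 t ht
  simp only [div_eq_mul_one_div (l * α + m * γ), div_eq_mul_one_div (l * β + m * δ)]
  rw [intervalIntegral.integral_add (hx.const_mul _) (hy.const_mul _),
    intervalIntegral.integral_const_mul, intervalIntegral.integral_const_mul, hxt, hyt]
  ring

theorem ae_pos (hsol : IsSolution α β γ δ x₀ y₀ x y) {t : ℝ} (ht : 0 ≤ t) :
    ∀ᵐ s ∂volume.restrict (Ioc 0 t), 0 < x s ∧ 0 < y s := by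
  obtain ⟨hx, hy, -⟩ := hsol.2.2.2.2.2 t ht
  have hnull : volume ({s ∈ Icc 0 t | x s = 0} ∪ {s ∈ Icc 0 t | y s = 0}) = 0 :=
    measure_union_null hx hy
  rw [ae_restrict_iff' measurableSet_Ioc]
  refine measure_mono_null (fun s hs => ?_) hnull
  obtain ⟨hst, hpos⟩ : s ∈ Ioc 0 t ∧ ¬(0 < x s ∧ 0 < y s) := by
    simpa only [mem_compl_iff, mem_ofPred_eq, Classical.not_imp] using hs
  have hnn := hsol.2.2.1 s hst.1.le
  have hzero : x s = 0 ∨ y s = 0 := by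
    by_contra! h
    exact hpos ⟨hnn.1.lt_of_ne' h.1, hnn.2.lt_of_ne' h.2⟩
  have hst' := Ioc_subset_Icc_self hst
  exact hzero.imp (fun h => ⟨hst', h⟩) (fun h => ⟨hst', h⟩)

end IsSolution

theorem hitting_time_bound_general (α β γ δ : ℝ)
    (lam mu : ℝ) (hlam : 0 < lam) (hmu : 0 < mu)
    (h1 : 0 < lam * α + mu * γ) (h2 : 0 < lam * β + mu * δ)
    (x₀ y₀ : ℝ)
    (r : ℝ) (hstart : lam * x₀ + mu * y₀ ≤ r)
    (x y : ℝ → ℝ) (hsol : IsSolution α β γ δ x₀ y₀ x y) :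
    {t : ℝ | 0 ≤ t ∧ lam * x t + mu * y t = r}.Nonempty ∧
      sInf {t : ℝ | 0 ≤ t ∧ lam * x t + mu * y t = r} ≤
        r ^ 2 / (2 * (lam * (lam * α + mu * γ) + mu * (lam * β + mu * δ))) := by
  set C := lam * (lam * α + mu * γ) + mu * (lam * β + mu * δ)
  have hC : 0 < C := by positivity
  set T := r ^ 2 / (2 * C)
  have hT : 0 ≤ T := by positivity
  have henergy : r ^ 2 ≤ (lam * x T + mu * y T) ^ 2 := by
    rw [hsol.linear_comb_eq lam mu hT]
    calc r ^ 2 ≤ (lam * x₀ + mu * y₀) ^ 2 + 2 * C * (T - 0) := by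
          have : 2 * C * T = r ^ 2 := by simp only [T]; field_simp
          nlinarith [sq_nonneg (lam * x₀ + mu * y₀)]
      _ ≤ _ := by
        refine sq_add_two_mul_le_sq_of_le_mul_integrand hT
          (hsol.intervalIntegrable_div_add_div _ _ hT) ?_
        filter_upwards [hsol.ae_pos hT, ae_restrict_mem measurableSet_Ioc] with s hpos hs
        rw [← hsol.linear_comb_eq lam mu hs.1.le]
        exact add_le_add_mul_div_add_div hlam.le hmu.le h1.le h2.le hpos.1 hpos.2
  obtain ⟨hxc, hyc, hnn, hx0, hy0, -⟩ := hsol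
  have hzT : 0 ≤ lam * x T + mu * y T := by
    obtain ⟨hxT, hyT⟩ := hnn T hT
    positivity
  refine exists_hitting_time_le hT ?_ (by rwa [hx0, hy0]) (abs_le_of_sq_le_sq' henergy hzT).2
  exact ((hxc.const_smul lam).add (hyc.const_smul mu)).mono fun _ hs => hs.1

/-- Under (H), with `λ, μ > 0` such that `λα + μγ > 0` and `λβ + μδ > 0`,
if a solution starts at `(x₀, y₀) ∈ S` with `λx₀ + μy₀ ≤ r` for some `r > 0`, then the
hitting time `τ(r) = inf {t ≥ 0 : λ x(t) + μ y(t) = r}` satisfies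
`τ(r) ≤ r² / (2[λ(λα + μγ) + μ(λβ + μδ)])`; in particular the set of hitting times is
nonempty, so `τ(r)` is finite. -/
theorem hitting_time_bound (α β γ δ : ℝ) (hα : 0 < α) (hδ : 0 < δ)
    (hH : max β γ ≥ 0 ∨ β * γ < α * δ)
    (lam mu : ℝ) (hlam : 0 < lam) (hmu : 0 < mu)
    (h1 : 0 < lam * α + mu * γ) (h2 : 0 < lam * β + mu * δ)
    (x₀ y₀ : ℝ) (hx₀ : 0 ≤ x₀) (hy₀ : 0 ≤ y₀)
    (r : ℝ) (hr : 0 < r) (hstart : lam * x₀ + mu * y₀ ≤ r)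
    (x y : ℝ → ℝ) (hsol : IsSolution α β γ δ x₀ y₀ x y) :
    {t : ℝ | 0 ≤ t ∧ lam * x t + mu * y t = r}.Nonempty ∧
      sInf {t : ℝ | 0 ≤ t ∧ lam * x t + mu * y t = r} ≤
        r ^ 2 / (2 * (lam * (lam * α + mu * γ) + mu * (lam * β + mu * δ))) :=
  hitting_time_bound_general α β γ δ lam mu hlam hmu h1 h2 x₀ y₀ r hstart x y hsol
end
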